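/- arXiv:2005.07171 — 11 statements merged into one kernel-verified Lean document; each statement's English description precedes it below -/
import Mathlib

section
/- Let G be a finite additive abelian group, let ψ : G → ℂ, let Q be the G×G complex matrix with entries Q_{g,h} = ψ(h − g), and let χ be an additive character of G with values in ℂ. Then the discrete Fourier transform of the first row of the matrix exponential of Q equals the exponential of the discrete Fourier transform of ψ: ∑_{h∈G} χ(h) · (exp Q)_{0,h} = exp( ∑_{h∈G} χ(h) · ψ(h) ). -/
/-! Every additive character `χ` is an eigenvector of a `G`-circulant matrix, with eigenvalue the
Fourier coefficient `∑ h, χ h * ψ h`; hence it is an eigenvector of `exp Q` with eigenvalue the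
exponential of that coefficient, and the theorem is the `0`-th coordinate of this identity. -/

open Matrix

section

-- Only needed for summability of the series; `NormedSpace.exp` depends on the topology alone.
attribute [local instance] Matrix.linftyOpNormedRing Matrix.linftyOpNormedAlgebra

theorem Matrix.exp_mulVec_of_mulVec_eq_smul {m 𝕂 : Type*} [Fintype m] [DecidableEq m] [RCLike 𝕂]
    {A : Matrix m m 𝕂} {v : m → 𝕂} {c : 𝕂} (hAv : A *ᵥ v = c • v) :
    NormedSpace.exp A *ᵥ v = NormedSpace.exp c • v := by
  have pow_mulVec : ∀ n : ℕ, A ^ n *ᵥ v = c ^ n • v := by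
    intro n
    induction n with
    | zero => simp
    | succ n ih => rw [pow_succ', ← mulVec_mulVec, ih, mulVec_smul, hAv, smul_smul, pow_succ]
  have hasSum_A := (NormedSpace.exp_series_hasSum_exp' (𝕂 := 𝕂) A).map
    (mulVec.addMonoidHomLeft v) (continuous_id.matrix_mulVec continuous_const)
  have hasSum_c := (NormedSpace.exp_series_hasSum_exp' (𝕂 := 𝕂) c).smul_const v
  refine hasSum_A.unique (hasSum_c.congr_fun fun n => ?_)
  simp only [Function.comp_apply, mulVec.addMonoidHomLeft, AddMonoidHom.coe_mk, ZeroHom.coe_mk,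
    smul_mulVec, pow_mulVec, smul_smul, smul_eq_mul]

end

theorem mulVec_addChar_of_circulant {G R : Type*} [AddCommGroup G] [Fintype G] [CommRing R]
    {ψ : G → R} {Q : Matrix G G R} (hQ : ∀ g h : G, Q g h = ψ (h - g)) (χ : AddChar G R) :
    Q *ᵥ χ = (∑ h : G, χ h * ψ h) • χ := by
  ext g
  simp only [mulVec, dotProduct, hQ, Pi.smul_apply, smul_eq_mul, Finset.sum_mul]
  rw [← Equiv.sum_comp (Equiv.addLeft g)]
  refine Finset.sum_congr rfl fun j _ => ?_
  simp only [Equiv.coe_addLeft, add_sub_cancel_left, AddChar.map_add_eq_mul]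
  ring

/-- For a `G`-circulant complex matrix `Q` with `Q g h = ψ (h - g)` and an additive character
`χ` of `G`, the discrete Fourier transform of the first row of the matrix exponential of `Q`
is the exponential of the discrete Fourier transform of `ψ`. -/
theorem dft_exp_row_zero {G : Type*} [AddCommGroup G] [Fintype G] [DecidableEq G]
    (ψ : G → ℂ) (Q : Matrix G G ℂ) (hQ : ∀ g h : G, Q g h = ψ (h - g))
    (χ : AddChar G ℂ) :
    ∑ h : G, χ h * (NormedSpace.exp Q) 0 h = Complex.exp (∑ h : G, χ h * ψ h) := by
  have row_zero := congrFun (exp_mulVec_of_mulVec_eq_smul (mulVec_addChar_of_circulant hQ χ)) 0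
  simpa [mulVec, dotProduct, mul_comm, Complex.exp_eq_exp_ℂ] using row_zero
end

section
/- Let G be a finite additive abelian group, e a character enumeration of G with discrete Fourier transform matrix K, 𝓛 a finite set, and L : G → 𝓛 a labeling function. If L is G-compatible with respect to e, then L(g) ≠ L(0) for every nonzero g ∈ G. -/
/-!
Testing compatibility of `g` and `0` against the indicator of a label class shows that the
character `e g` sums to the size of that class over it. Its values have modulus one, so they
must all equal `1`: `e g` is the trivial character `e 0`, and injectivity of `e` gives `g = 0`.
-/

open Finset

open scoped ComplexOrder in
lemma Complex.eq_one_of_sum_eq_card {ι : Type*} {s : Finset ι} {z : ι → ℂ}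
    (hz : ∀ i ∈ s, ‖z i‖ ≤ 1) (hsum : ∑ i ∈ s, z i = #s) : ∀ i ∈ s, z i = 1 := by
  have hre_le : ∀ i ∈ s, (z i).re ≤ 1 := fun i hi => (re_le_norm (z i)).trans (hz i hi)
  have hre_sum : ∑ i ∈ s, (z i).re = ∑ _i ∈ s, (1 : ℝ) := by
    simpa [re_sum] using congrArg re hsum
  intro i hi
  have hre : (z i).re = 1 := (sum_eq_sum_iff_of_le hre_le).mp hre_sum i hi
  have hnonneg : 0 ≤ z i := re_eq_norm.mp (le_antisymm (re_le_norm _) ((hz i hi).trans hre.ge))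
  rw [← re_add_im (z i), ← (nonneg_iff.mp hnonneg).2, hre]
  simp

lemma sum_fiber_eq_of_forall_sum_mul_comp_eq {ι 𝓛 R : Type*} [Fintype ι] [DecidableEq 𝓛]
    [CommSemiring R] {u v : ι → R} {L : ι → 𝓛}
    (h : ∀ x : 𝓛 → R, ∑ k, u k * x (L k) = ∑ k, v k * x (L k)) (l : 𝓛) :
    ∑ k with L k = l, u k = ∑ k with L k = l, v k := by
  simpa [sum_filter] using h fun m => if m = l then 1 else 0

theorem compatible_labeling_zero_label_general {G : Type*} [AddCommGroup G] [Fintype G]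
    {𝓛 : Type*}
    (e : G → AddChar G ℂ) (he : Function.Bijective e)
    (hmul : ∀ g h : G, e (g + h) = e g * e h)
    (K : Matrix G G ℂ) (hK : ∀ g h : G, K g h = e g h)
    (L : G → 𝓛)
    (hcompat : ∀ (x : 𝓛 → ℂ) (g h : G), L g = L h →
      (∑ k : G, K g k * x (L k) = ∑ k : G, K h k * x (L k)) ∧
      (∑ k : G, (starRingEnd ℂ) (K g k) * x (L k) =
        ∑ k : G, (starRingEnd ℂ) (K h k) * x (L k))) :
    ∀ g : G, g ≠ 0 → L g ≠ L 0 := by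
  classical
  intro g hg hL
  have he0 : e 0 = 1 := left_eq_mul.mp (by simpa only [add_zero] using hmul 0 0)
  have hfiber (l : 𝓛) : ∑ k with L k = l, e g k = #{k | L k = l} := by
    simpa [hK, he0] using
      sum_fiber_eq_of_forall_sum_mul_comp_eq (fun x => (hcompat x g 0 hL).1) l
  have hg1 : e g = 1 := by
    ext k
    exact Complex.eq_one_of_sum_eq_card (fun i _ => (AddChar.norm_apply _ i).le)
      (hfiber (L k)) k (by simp)
  exact hg (he.injective (hg1.trans he0.symm))

/-- If `L : G → 𝓛` is a `G`-compatible labeling function (with respect to a character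
enumeration `e` of `G` with discrete Fourier transform matrix `K`), then no nonzero group
element receives the same label as `0`. -/
theorem compatible_labeling_zero_label {G : Type*} [AddCommGroup G] [Fintype G]
    {𝓛 : Type*} [Fintype 𝓛]
    (e : G → AddChar G ℂ) (he : Function.Bijective e)
    (hmul : ∀ g h : G, e (g + h) = e g * e h)
    (K : Matrix G G ℂ) (hK : ∀ g h : G, K g h = e g h)
    (L : G → 𝓛)
    (hcompat : ∀ (x : 𝓛 → ℂ) (g h : G), L g = L h →
      (∑ k : G, K g k * x (L k) = ∑ k : G, K h k * x (L k)) ∧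
      (∑ k : G, (starRingEnd ℂ) (K g k) * x (L k) =
        ∑ k : G, (starRingEnd ℂ) (K h k) * x (L k))) :
    ∀ g : G, g ≠ 0 → L g ≠ L 0 :=
  compatible_labeling_zero_label_general e he hmul K hK L hcompat
end

section
/- Let G be a finite additive abelian group, e a character enumeration of G with discrete Fourier transform matrix K, 𝓛 a finite set, and L : G → 𝓛 a labeling function such that for all g, h ∈ G one has L(g) = L(h) if and only if g = h or g = −h. Then L is G-compatible with respect to e: for every vector x : 𝓛 → ℂ and all g,h ∈ G with L(g) = L(h), ∑_{k∈G} K_{g,k}·x(L(k)) = ∑_{k∈G} K_{h,k}·x(L(k)) and ∑_{k∈G} conj(K_{g,k})·x(L(k)) = ∑_{k∈G} conj(K_{h,k})·x(L(k)). -/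
/-!
Since `e` is a homomorphism into the group of characters, `e (-h) = (e h)⁻¹`, i.e.
`K (-h) k = K h (-k)`. The only nontrivial case `g = -h` of the claim then follows by
reindexing both sums along `k ↦ -k`, which leaves `x ∘ L` unchanged because `L (-k) = L k`.
-/

theorem map_neg_eq_inv_of_map_add {G H : Type*} [AddGroup G] [Group H] {f : G → H}
    (hf : ∀ a b, f (a + b) = f a * f b) (a : G) : f (-a) = (f a)⁻¹ :=
  map_inv (MonoidHom.mk' (f ∘ Multiplicative.toAdd) fun a b => hf a.toAdd b.toAdd)
    (Multiplicative.ofAdd a)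

theorem sum_apply_neg_mul_eq_of_even {G R : Type*} [AddGroup G] [Fintype G] [Mul R]
    [AddCommMonoid R] {F : G → G → R} (hF : ∀ g k, F (-g) k = F g (-k))
    {y : G → R} (hy : ∀ k, y (-k) = y k) (g : G) :
    ∑ k, F (-g) k * y k = ∑ k, F g k * y k := by
  calc ∑ k, F (-g) k * y k = ∑ k, F g (-k) * y (-k) := by simp only [hF, hy]
    _ = ∑ k, F g k * y k := Equiv.sum_comp (Equiv.neg G) fun k => F g k * y k

theorem strictly_symmetric_labeling_compatible_general {G : Type*} [AddCommGroup G] [Fintype G]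
    {𝓛 : Type*}
    (e : G → AddChar G ℂ)
    (hmul : ∀ g h : G, e (g + h) = e g * e h)
    (K : Matrix G G ℂ) (hK : ∀ g h : G, K g h = e g h)
    (L : G → 𝓛) (hL : ∀ g h : G, L g = L h ↔ (g = h ∨ g = -h)) :
    ∀ (x : 𝓛 → ℂ) (g h : G), L g = L h →
      (∑ k : G, K g k * x (L k) = ∑ k : G, K h k * x (L k)) ∧
      (∑ k : G, (starRingEnd ℂ) (K g k) * x (L k) =
        ∑ k : G, (starRingEnd ℂ) (K h k) * x (L k)) := by
  intro x g h hgh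
  rcases (hL g h).1 hgh with rfl | rfl
  · exact ⟨rfl, rfl⟩
  have hK_neg : ∀ g k, K (-g) k = K g (-k) := fun g k => by
    rw [hK, hK, map_neg_eq_inv_of_map_add hmul, AddChar.inv_apply]
  have hxL_even : ∀ k, x (L (-k)) = x (L k) := fun k => congrArg x ((hL _ _).2 (Or.inr rfl))
  exact ⟨sum_apply_neg_mul_eq_of_even hK_neg hxL_even h,
    sum_apply_neg_mul_eq_of_even (F := fun g k => starRingEnd ℂ (K g k))
      (fun g k => congrArg _ (hK_neg g k)) hxL_even h⟩

/-- If a labeling function `L : G → 𝓛` identifies two group elements exactly when they are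
equal or inverse to each other, then `L` is `G`-compatible with respect to any character
enumeration `e` of `G` with discrete Fourier transform matrix `K`. -/
theorem strictly_symmetric_labeling_compatible {G : Type*} [AddCommGroup G] [Fintype G]
    {𝓛 : Type*} [Fintype 𝓛]
    (e : G → AddChar G ℂ) (he : Function.Bijective e)
    (hmul : ∀ g h : G, e (g + h) = e g * e h)
    (K : Matrix G G ℂ) (hK : ∀ g h : G, K g h = e g h)
    (L : G → 𝓛) (hL : ∀ g h : G, L g = L h ↔ (g = h ∨ g = -h)) :
    ∀ (x : 𝓛 → ℂ) (g h : G), L g = L h →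
      (∑ k : G, K g k * x (L k) = ∑ k : G, K h k * x (L k)) ∧
      (∑ k : G, (starRingEnd ℂ) (K g k) * x (L k) =
        ∑ k : G, (starRingEnd ℂ) (K h k) * x (L k)) :=
  strictly_symmetric_labeling_compatible_general e hmul K hK L hL
end

section
/- Let G be a finite additive abelian group, e a character enumeration of G with discrete Fourier transform matrix K, 𝓛 a finite set, and L : G → 𝓛 a symmetric G-compatible labeling function. Let P be a (G,L)-Markov matrix determined by f : G → ℝ, and for g ∈ G let λ_g denote the real part of ∑_{h∈G} K_{g,h}·f(h) (these sums are in fact real and are the eigenvalues of P). Then P is (G,L)-embeddable if and only if: λ_0 = 1; λ_g > 0 for all g ∈ G; λ_g = λ_h whenever L(g) = L(h); and for every nonzero g ∈ G the real-power product ∏_{h∈G} λ_h^{Re(K_{g,h})} ≥ 1. -/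
/-!
The character matrix `K` diagonalises every group-based matrix,
`K * circulant v = diagonal (K *ᵥ v) * K`, and `K * K` is `|G|` times the permutation matrix of a
bijection `τ` of `G` fixing `0`; in particular `K` is invertible. Hence `P = exp Q_ψ` exactly when
`λ = exp (K ψ)`, where `K ψ` is real because `ψ` is symmetric. Conversely, when `λ > 0` the real
symmetric vector `μ = log λ` equals `K ψ` for the real `ψ` given by `|G| ψ (τ g) = (K μ) g`.
Under `μ = K ψ` the conditions on a rate function translate one by one: `∑ ψ = μ 0`;
`ψ ≥ 0` off `0` becomes `Re (K μ) g = |G| ψ (τ g) ≥ 0` for `g ≠ 0`, which is the product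
condition; and `ψ` is constant on labels iff `μ` is, since the injective map `K` preserves the
finite-dimensional space of label-constant vectors.
-/

open Matrix Function

section
attribute [local instance] Matrix.linftyOpNormedRing Matrix.linftyOpNormedAlgebra

theorem Matrix.exp_map_ofReal {m : Type*} [Fintype m] [DecidableEq m] (A : Matrix m m ℝ) :
    NormedSpace.exp (A.map Complex.ofReal) = (NormedSpace.exp A).map Complex.ofReal :=
  (NormedSpace.map_exp Complex.ofRealHom.mapMatrix
    (continuous_id.matrix_map Complex.continuous_ofReal) A).symm

end

theorem Submodule.mem_of_apply_mem {K V : Type*} [Field K] [AddCommGroup V] [Module K V]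
    [FiniteDimensional K V] {W : Submodule K V} {f : V →ₗ[K] V} (hf : Injective f)
    (hW : ∀ x ∈ W, f x ∈ W) {x : V} (hx : f x ∈ W) : x ∈ W := by
  have hinj : Injective (f.restrict hW) := fun a b hab => Subtype.ext (hf congr($hab.1))
  obtain ⟨y, hy⟩ := LinearMap.injective_iff_surjective.1 hinj ⟨f x, hx⟩
  exact hf congr($hy.1) ▸ y.2

theorem Matrix.factorsThrough_of_mulVec {n 𝕜 𝓛 : Type*} [Fintype n] [DecidableEq n] [Field 𝕜]
    {A : Matrix n n 𝕜} (hA : IsUnit A) {L : n → 𝓛}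
    (hAL : ∀ x, FactorsThrough x L → FactorsThrough (A *ᵥ x) L) {x : n → 𝕜}
    (hx : FactorsThrough (A *ᵥ x) L) : FactorsThrough x L := by
  have hmem (y : n → 𝕜) : y ∈ LinearMap.range (LinearMap.funLeft 𝕜 𝕜 L) ↔ FactorsThrough y L :=
    ⟨by rintro ⟨z, rfl⟩ a b hab; simp [hab], fun hy => ⟨extend L y (0 : 𝓛 → 𝕜), hy.extend_comp _⟩⟩
  rw [← hmem] at hx ⊢
  exact Submodule.mem_of_apply_mem (f := A.mulVecLin) (mulVec_injective_iff_isUnit.2 hA)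
    (fun y hy => (hmem _).2 (hAL y ((hmem y).1 hy))) hx

theorem Matrix.prod_exp_rpow_re {m n : Type*} [Fintype n] (A : Matrix m n ℂ) (μ : n → ℝ) (g : m) :
    ∏ h, Real.exp (μ h) ^ (A g h).re = Real.exp ((A *ᵥ (Complex.ofReal ∘ μ)) g).re := by
  simp [← Real.exp_mul, ← Real.exp_sum, mulVec, dotProduct, Complex.re_sum, mul_comm]

section CharMatrix

variable {ι G R : Type*} [AddCommGroup G]

def charMatrix [Monoid R] (χ : ι → AddChar G R) : Matrix ι G R := .of fun c g => χ c g

@[simp] lemma charMatrix_apply [Monoid R] (χ : ι → AddChar G R) (c : ι) (g : G) :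
    charMatrix χ c g = χ c g := rfl

variable [Fintype G]

theorem charMatrix_mul_circulant [CommSemiring R] [Fintype ι] [DecidableEq ι]
    (χ : ι → AddChar G R) (v : G → R) :
    charMatrix χ * circulant v = diagonal (charMatrix χ *ᵥ v) * charMatrix χ := by
  ext c h
  rw [diagonal_mul, mul_apply, mulVec, dotProduct, Finset.sum_mul]
  refine (Fintype.sum_equiv (Equiv.addRight h) _ _ fun d => ?_).symm
  simp [AddChar.map_add_eq_mul, mul_right_comm]

theorem ofReal_re_charMatrix_mulVec (χ : ι → AddChar G ℂ) {v : G → ℝ} (hv : v.Even) (c : ι) :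
    (((charMatrix χ *ᵥ (Complex.ofReal ∘ v)) c).re : ℂ) =
      (charMatrix χ *ᵥ (Complex.ofReal ∘ v)) c := by
  refine Complex.conj_eq_iff_re.mp ?_
  simp only [mulVec, dotProduct, charMatrix_apply, Function.comp_apply, map_sum, map_mul,
    Complex.conj_ofReal, ← AddChar.map_neg_eq_conj]
  exact Fintype.sum_equiv (Equiv.neg G) _ _ fun g => by simp [hv g]

end CharMatrix

structure IsCharacterEnumeration {G : Type*} [AddCommGroup G] (e : G → AddChar G ℂ) : Prop where
  bijective : Bijective e
  map_add : ∀ g h, e (g + h) = e g * e h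

namespace IsCharacterEnumeration

variable {G : Type*} [AddCommGroup G] {e : G → AddChar G ℂ} (he : IsCharacterEnumeration e)
include he

theorem map_zero : e 0 = 1 := by
  simpa using he.map_add 0 0

variable [Fintype G]

theorem exists_equiv_apply_swap : ∃ σ : G ≃ G, σ 0 = 0 ∧ ∀ k g, e g k = e (σ k) g := by
  let col (k : G) : AddChar G ℂ :=
    { toFun := fun g => e g k
      map_zero_eq_one' := by simp [he.map_zero]
      map_add_eq_mul' := fun a b => by simp [he.map_add] }
  have hcol : Injective col := fun k k' hk => AddChar.doubleDualEmb_injective <| by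
    ext ψ
    obtain ⟨g, rfl⟩ := he.bijective.2 ψ
    exact DFunLike.congr_fun hk g
  let ε := Equiv.ofBijective e he.bijective
  let σ := Equiv.ofBijective (ε.symm ∘ col)
    (Finite.injective_iff_bijective.1 (ε.symm.injective.comp hcol))
  have hσ k : e (σ k) = col k := ε.apply_symm_apply (col k)
  refine ⟨σ, he.bijective.1 ?_, fun k g => by rw [hσ]; rfl⟩
  rw [hσ, he.map_zero]
  ext g
  simp [col]

theorem charMatrix_mulVec_zero (x : G → ℂ) : (charMatrix e *ᵥ x) 0 = ∑ g, x g := by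
  simp [mulVec, dotProduct, he.map_zero]

variable [DecidableEq G]

theorem sum_apply (g : G) : ∑ h, e g h = if g = 0 then (Fintype.card G : ℂ) else 0 := by
  rw [AddChar.sum_eq_ite]
  congr 1
  rw [show (0 : AddChar G ℂ) = e 0 from he.map_zero.symm, he.bijective.1.eq_iff]

theorem exists_charMatrix_mulVec_mulVec :
    ∃ τ : G ≃ G, τ 0 = 0 ∧
      ∀ (x : G → ℂ) g, (charMatrix e *ᵥ charMatrix e *ᵥ x) g = Fintype.card G * x (τ g) := by
  obtain ⟨σ, hσ0, hσ⟩ := he.exists_equiv_apply_swap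
  refine ⟨(Equiv.neg G).trans σ.symm, by simp [Equiv.symm_apply_eq, hσ0], fun x g => ?_⟩
  have hsq d : (charMatrix e * charMatrix e) g d =
      if g + σ d = 0 then (Fintype.card G : ℂ) else 0 := by
    simp only [mul_apply, charMatrix_apply, hσ d, ← he.sum_apply, he.map_add, AddChar.mul_apply]
  have hcond d : g + σ d = 0 ↔ d = σ.symm (-g) := by
    rw [Equiv.eq_symm_apply, eq_neg_iff_add_eq_zero, add_comm]
  rw [mulVec_mulVec, mulVec, dotProduct]
  simp [hsq, hcond]

theorem isUnit_charMatrix : IsUnit (charMatrix e) := by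
  obtain ⟨τ, -, hτ⟩ := he.exists_charMatrix_mulVec_mulVec
  refine mulVec_injective_iff_isUnit.1 fun x y hxy => funext fun k => ?_
  obtain ⟨g, rfl⟩ := τ.surjective k
  have h := congrFun (congrArg (charMatrix e *ᵥ ·) hxy) g
  rwa [hτ, hτ, mul_right_inj' (Nat.cast_ne_zero.2 Fintype.card_ne_zero)] at h

theorem circulant_eq_exp_circulant_iff (v w : G → ℂ) :
    circulant v = NormedSpace.exp (circulant w) ↔
      charMatrix e *ᵥ v = Complex.exp ∘ (charMatrix e *ᵥ w) := by
  obtain ⟨u, hu⟩ := he.isUnit_charMatrix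
  have hdiag (x : G → ℂ) : (u : Matrix G G ℂ) * circulant x * (↑u⁻¹ : Matrix G G ℂ) =
      diagonal (charMatrix e *ᵥ x) := by
    rw [hu, charMatrix_mul_circulant, Matrix.mul_assoc, ← hu, Units.mul_inv, Matrix.mul_one]
  rw [← Units.mul_left_inj u⁻¹, ← Units.mul_right_inj u, ← Matrix.mul_assoc, ← Matrix.mul_assoc,
    ← exp_units_conj, hdiag, hdiag, exp_diagonal, diagonal_injective.eq_iff, Pi.exp_def,
    Complex.exp_eq_exp_ℂ]
  rfl

theorem transpose_circulant_eq_exp_iff {v w α β : G → ℝ}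
    (hv : charMatrix e *ᵥ (Complex.ofReal ∘ v) = Complex.ofReal ∘ α)
    (hw : charMatrix e *ᵥ (Complex.ofReal ∘ w) = Complex.ofReal ∘ β) :
    (circulant v)ᵀ = NormedSpace.exp (circulant w)ᵀ ↔ α = Real.exp ∘ β := by
  rw [exp_transpose, transpose_inj, ← (map_injective Complex.ofReal_injective).eq_iff,
    ← exp_map_ofReal, map_circulant, map_circulant]
  change circulant (Complex.ofReal ∘ v) = NormedSpace.exp (circulant (Complex.ofReal ∘ w)) ↔ _
  simp only [he.circulant_eq_exp_circulant_iff, hv, hw, funext_iff, Function.comp_apply,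
    ← Complex.ofReal_exp, Complex.ofReal_inj]

theorem exists_ofReal_mulVec_eq {μ : G → ℝ} (hμ : μ.Even) :
    ∃ ψ : G → ℝ, charMatrix e *ᵥ (Complex.ofReal ∘ ψ) = Complex.ofReal ∘ μ := by
  obtain ⟨τ, -, hτ⟩ := he.exists_charMatrix_mulVec_mulVec
  refine ⟨fun k => ((charMatrix e *ᵥ (Complex.ofReal ∘ μ)) (τ.symm k)).re / Fintype.card G,
    mulVec_injective_iff_isUnit.2 he.isUnit_charMatrix (funext fun g => ?_)⟩
  rw [hτ]
  simp only [Function.comp_apply, Equiv.symm_apply_apply, Complex.ofReal_div,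
    ofReal_re_charMatrix_mulVec e hμ, Complex.ofReal_natCast]
  exact mul_div_cancel₀ _ (Nat.cast_ne_zero.2 Fintype.card_ne_zero)

theorem rate_conditions_iff {𝓛 : Type*} {L : G → 𝓛}
    (hL : ∀ x, FactorsThrough x L → FactorsThrough (charMatrix e *ᵥ x) L) {ψ μ : G → ℝ}
    (hψ : charMatrix e *ᵥ (Complex.ofReal ∘ ψ) = Complex.ofReal ∘ μ) :
    (∑ g, ψ g = 0 ∧ (∀ g, g ≠ 0 → 0 ≤ ψ g) ∧ FactorsThrough ψ L) ↔
      (μ 0 = 0 ∧ (∀ g, g ≠ 0 → 1 ≤ ∏ h, Real.exp (μ h) ^ (charMatrix e g h).re) ∧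
        FactorsThrough μ L) := by
  obtain ⟨τ, hτ0, hτ⟩ := he.exists_charMatrix_mulVec_mulVec
  have hsum : ∑ g, ψ g = μ 0 := by
    have h := (he.charMatrix_mulVec_zero _).symm.trans (congrFun hψ 0)
    simp only [Function.comp_apply] at h
    exact_mod_cast h
  have hprod g : 1 ≤ ∏ h, Real.exp (μ h) ^ (charMatrix e g h).re ↔ 0 ≤ ψ (τ g) := by
    rw [prod_exp_rpow_re, ← hψ, hτ, Real.one_le_exp_iff]
    simp [Fintype.card_pos]
  have hnonneg : (∀ g, g ≠ 0 → 0 ≤ ψ g) ↔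
      ∀ g, g ≠ 0 → 1 ≤ ∏ h, Real.exp (μ h) ^ (charMatrix e g h).re := by
    simp only [hprod, ← τ.forall_congr_right (q := fun k => k ≠ 0 → 0 ≤ ψ k),
      τ.injective.ne_iff' hτ0]
  have hofReal {x : G → ℝ} : FactorsThrough (Complex.ofReal ∘ x) L ↔ FactorsThrough x L :=
    ⟨fun h _ _ hab => Complex.ofReal_injective (h hab),
      fun h _ _ hab => congrArg Complex.ofReal (h hab)⟩
  have hlabel : FactorsThrough ψ L ↔ FactorsThrough μ L := by
    rw [← hofReal, ← hofReal, ← hψ]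
    exact ⟨hL _, factorsThrough_of_mulVec he.isUnit_charMatrix hL⟩
  rw [hsum, hnonneg, hlabel]

end IsCharacterEnumeration

theorem model_embeddability_symmetric_group_based_general
    {G : Type*} [AddCommGroup G] [Fintype G] [DecidableEq G]
    {𝓛 : Type*}
    (e : G → AddChar G ℂ) (he : Function.Bijective e)
    (hmul : ∀ g h : G, e (g + h) = e g * e h)
    (K : Matrix G G ℂ) (hK : ∀ g h : G, K g h = e g h)
    (L : G → 𝓛) (hLsym : ∀ g : G, L (-g) = L g)
    (hcompat : ∀ (x : 𝓛 → ℂ) (g h : G), L g = L h →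
      (∑ k : G, K g k * x (L k) = ∑ k : G, K h k * x (L k)) ∧
      (∑ k : G, (starRingEnd ℂ) (K g k) * x (L k) =
        ∑ k : G, (starRingEnd ℂ) (K h k) * x (L k)))
    (f : G → ℝ)
    (hfsym : ∀ g : G, f (-g) = f g) (hflabel : ∀ g h : G, L g = L h → f g = f h)
    (P : Matrix G G ℝ) (hP : ∀ g h : G, P g h = f (h - g))
    (lam : G → ℝ) (hlam : ∀ g : G, lam g = (∑ h : G, K g h * (f h : ℂ)).re) :
    (∃ ψ : G → ℝ, (∑ g : G, ψ g = 0) ∧ (∀ g : G, g ≠ 0 → 0 ≤ ψ g) ∧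
      (∀ g h : G, L g = L h → ψ g = ψ h) ∧
      P = NormedSpace.exp (Matrix.of fun g h : G => ψ (h - g))) ↔
    (lam 0 = 1 ∧ (∀ g : G, 0 < lam g) ∧ (∀ g h : G, L g = L h → lam g = lam h) ∧
      ∀ g : G, g ≠ 0 → 1 ≤ ∏ h : G, lam h ^ (K g h).re) := by
  have he : IsCharacterEnumeration e := ⟨he, hmul⟩
  obtain rfl : K = charMatrix e := Matrix.ext hK
  obtain rfl : P = (circulant f)ᵀ := Matrix.ext hP
  have hKL (x : G → ℂ) (hx : FactorsThrough x L) : FactorsThrough (charMatrix e *ᵥ x) L :=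
    fun a b hab => by simpa [mulVec, dotProduct, hx.extend_apply] using
      (hcompat (extend L x 0) a b hab).1
  have hspec : charMatrix e *ᵥ (Complex.ofReal ∘ f) = Complex.ofReal ∘ lam :=
    funext fun g => by
      rw [Function.comp_apply, hlam]
      exact (ofReal_re_charMatrix_mulVec e hfsym g).symm
  have hlamL : FactorsThrough lam L := fun a b hab => by
    rw [hlam, hlam]
    exact congrArg Complex.re (hKL _ (fun a b hab => by simp [hflabel a b hab]) hab)
  constructor
  · rintro ⟨ψ, hsum, hnonneg, hψL, hexp⟩
    have hψ : charMatrix e *ᵥ (Complex.ofReal ∘ ψ) = Complex.ofReal ∘ _ :=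
      funext fun c => (ofReal_re_charMatrix_mulVec e (fun g => hψL _ _ (hLsym g)) c).symm
    obtain rfl := (he.transpose_circulant_eq_exp_iff hspec hψ).1 hexp
    obtain ⟨hμ0, hprod, -⟩ := (he.rate_conditions_iff hKL hψ).1 ⟨hsum, hnonneg, hψL⟩
    exact ⟨by simp [hμ0], fun g => Real.exp_pos _, hlamL, hprod⟩
  · rintro ⟨hlam0, hpos, -, hprod⟩
    have hlog : lam = Real.exp ∘ (Real.log ∘ lam) :=
      funext fun g => (Real.exp_log (hpos g)).symm
    obtain ⟨ψ, hψ⟩ := he.exists_ofReal_mulVec_eq (μ := Real.log ∘ lam)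
      fun g => congrArg Real.log (hlamL (hLsym g))
    obtain ⟨hsum, hnonneg, hψL⟩ := (he.rate_conditions_iff hKL hψ).2
      ⟨by simp [hlam0], by simpa [Real.exp_log, hpos] using hprod,
        fun a b hab => congrArg Real.log (hlamL hab)⟩
    exact ⟨ψ, hsum, hnonneg, hψL, (he.transpose_circulant_eq_exp_iff hspec hψ).2 hlog⟩

/-- Main theorem: a `(G, L)`-Markov matrix `P` (for a symmetric `G`-compatible labeling `L`)
is `(G, L)`-embeddable, i.e. `P = exp Q` for some `(G, L)`-rate matrix `Q`, if and only if
its vector of eigenvalues `lam` (given by the discrete Fourier transform of `f`) satisfies: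
`lam 0 = 1`, `lam g > 0` for all `g`, `lam g = lam h` whenever `L g = L h`, and
`∏ h, (lam h) ^ Re (K g h) ≥ 1` for every nonzero `g`. -/
theorem model_embeddability_symmetric_group_based
    {G : Type*} [AddCommGroup G] [Fintype G] [DecidableEq G]
    {𝓛 : Type*} [Fintype 𝓛]
    (e : G → AddChar G ℂ) (he : Function.Bijective e)
    (hmul : ∀ g h : G, e (g + h) = e g * e h)
    (K : Matrix G G ℂ) (hK : ∀ g h : G, K g h = e g h)
    (L : G → 𝓛) (hLsym : ∀ g : G, L (-g) = L g)
    (hcompat : ∀ (x : 𝓛 → ℂ) (g h : G), L g = L h →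
      (∑ k : G, K g k * x (L k) = ∑ k : G, K h k * x (L k)) ∧
      (∑ k : G, (starRingEnd ℂ) (K g k) * x (L k) =
        ∑ k : G, (starRingEnd ℂ) (K h k) * x (L k)))
    (f : G → ℝ) (hfsum : ∑ g : G, f g = 1) (hfnonneg : ∀ g : G, 0 ≤ f g)
    (hfsym : ∀ g : G, f (-g) = f g) (hflabel : ∀ g h : G, L g = L h → f g = f h)
    (P : Matrix G G ℝ) (hP : ∀ g h : G, P g h = f (h - g))
    (lam : G → ℝ) (hlam : ∀ g : G, lam g = (∑ h : G, K g h * (f h : ℂ)).re) :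
    (∃ ψ : G → ℝ, (∑ g : G, ψ g = 0) ∧ (∀ g : G, g ≠ 0 → 0 ≤ ψ g) ∧
      (∀ g h : G, L g = L h → ψ g = ψ h) ∧
      P = NormedSpace.exp (Matrix.of fun g h : G => ψ (h - g))) ↔
    (lam 0 = 1 ∧ (∀ g : G, 0 < lam g) ∧ (∀ g h : G, L g = L h → lam g = lam h) ∧
      ∀ g : G, g ≠ 0 → 1 ≤ ∏ h : G, lam h ^ (K g h).re) :=
  model_embeddability_symmetric_group_based_general e he hmul K hK L hLsym hcompat f hfsym hflabel P
    hP lam hlam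
end

section
/- Let a, b ∈ ℝ with a ≥ 0, b ≥ 0 and a + b = 1, and let P be the 2×2 real matrix with rows (a, b) and (b, a) (a CFN Markov matrix). Then there exists q ≥ 0 such that P = exp(Q), where Q is the 2×2 matrix with rows (−q, q) and (q, −q) (a CFN rate matrix), if and only if a − b > 0. -/
/-!
The Hadamard matrix with columns `(1, 1)` and `(1, -1)` diagonalises the CFN rate matrix `Q`
with eigenvalues `0` and `-2q`, so `exp Q` is the CFN Markov matrix with `a - b = exp (-2q)`.
This equation has a solution `q ≥ 0` precisely when `0 < a - b ≤ 1`, and the upper bound is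
automatic for a Markov matrix.
-/

open Matrix NormedSpace

noncomputable def hadamardTwo : (Matrix (Fin 2) (Fin 2) ℝ)ˣ where
  val := !![1, 1; 1, -1]
  inv := !![1 / 2, 1 / 2; 1 / 2, -1 / 2]
  val_inv := by norm_num [mul_fin_two, ← one_fin_two]
  inv_val := by norm_num [mul_fin_two, ← one_fin_two]

lemma cfnRate_eq_conj_diagonal (q : ℝ) :
    !![-q, q; q, -q] = (hadamardTwo : Matrix (Fin 2) (Fin 2) ℝ) * diagonal ![0, -2 * q] *
      (↑hadamardTwo⁻¹ : Matrix (Fin 2) (Fin 2) ℝ) := by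
  simp only [hadamardTwo, Units.inv_mk, diagonal_fin_two, mul_fin_two]
  ext i j; fin_cases i <;> fin_cases j <;> simp <;> ring

lemma exp_cfnRate (q : ℝ) :
    exp !![-q, q; q, -q] =
      !![(1 + Real.exp (-2 * q)) / 2, (1 - Real.exp (-2 * q)) / 2;
        (1 - Real.exp (-2 * q)) / 2, (1 + Real.exp (-2 * q)) / 2] := by
  have hexp : exp ![(0 : ℝ), -2 * q] = ![1, Real.exp (-2 * q)] := by
    ext i; fin_cases i <;> simp [Real.exp_eq_exp_ℝ]
  rw [cfnRate_eq_conj_diagonal, Matrix.exp_units_conj, Matrix.exp_diagonal, hexp]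
  simp only [hadamardTwo, Units.inv_mk, diagonal_fin_two, mul_fin_two]
  ext i j; fin_cases i <;> fin_cases j <;> simp <;> ring

lemma cfnMarkov_eq_exp_cfnRate_iff {a b : ℝ} (hab : a + b = 1) (q : ℝ) :
    !![a, b; b, a] = exp !![-q, q; q, -q] ↔ a - b = Real.exp (-2 * q) := by
  rw [exp_cfnRate]
  constructor
  · intro h
    have h00 := congrFun₂ h 0 0
    have h01 := congrFun₂ h 0 1
    simp only [of_apply, cons_val', cons_val_zero, cons_val_one, empty_val',
      cons_val_fin_one] at h00 h01
    linarith
  · intro h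
    rw [← h]
    ext i j; fin_cases i <;> fin_cases j <;> simp <;> linarith

theorem cfn_embeddable_iff_general (a b : ℝ) (hb : 0 ≤ b) (hab : a + b = 1) :
    (∃ q : ℝ, 0 ≤ q ∧ !![a, b; b, a] = NormedSpace.exp !![-q, q; q, -q]) ↔ 0 < a - b := by
  simp only [cfnMarkov_eq_exp_cfnRate_iff hab]
  constructor
  · rintro ⟨q, -, hq⟩
    exact hq ▸ Real.exp_pos _
  · intro hpos
    refine ⟨-Real.log (a - b) / 2, ?_, ?_⟩
    · have : Real.log (a - b) ≤ 0 := Real.log_nonpos hpos.le (by linarith)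
      linarith
    · rw [show -2 * (-Real.log (a - b) / 2) = Real.log (a - b) by ring, Real.exp_log hpos]

/-- A CFN Markov matrix with rows `(a, b)` and `(b, a)` is CFN embeddable, i.e. the matrix
exponential of a CFN rate matrix, if and only if `a - b > 0`. -/
theorem cfn_embeddable_iff (a b : ℝ) (ha : 0 ≤ a) (hb : 0 ≤ b) (hab : a + b = 1) :
    (∃ q : ℝ, 0 ≤ q ∧ !![a, b; b, a] = NormedSpace.exp !![-q, q; q, -q]) ↔ 0 < a - b :=
  cfn_embeddable_iff_general a b hb hab
end

section
/- Let a, b, c, d ∈ ℝ with a, b, c, d ≥ 0 and a + b + c + d = 1, and let P be the 4×4 real matrix with rows (a,b,c,d), (b,a,d,c), (c,d,a,b), (d,c,b,a) (a Kimura 3-parameter Markov matrix). Set λ₁ = a − b + c − d, λ₂ = a + b − c − d, λ₃ = a − b − c + d (the nonunit eigenvalues of P). Then there exist β, γ, δ ≥ 0 such that P = exp(Q), where Q is the 4×4 matrix with rows (α,β,γ,δ), (β,α,δ,γ), (γ,δ,α,β), (δ,γ,β,α) and α = −(β+γ+δ) (a Kimura 3-parameter rate matrix), if and only if λ₁ >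 0, λ₂ > 0, λ₃ > 0, λ₂·λ₃ ≤ λ₁, λ₁·λ₃ ≤ λ₂, and λ₁·λ₂ ≤ λ₃. -/
/-!
The Hadamard matrix, i.e. the character table of `ℤ/2 × ℤ/2`, simultaneously diagonalizes all
K3P matrices, so the exponential acts on them through their eigenvalues: `P = exp Q` iff
`λ₁, λ₂, λ₃` are `exp (-2(β + δ)), exp (-2(γ + δ)), exp (-2(β + γ))` (the unit eigenvalue is
matched by the row sum condition). This linear system in `log λᵢ` has a unique solution
`(β, γ, δ)`, and its nonnegativity is exactly the three product inequalities.
-/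

open Matrix

section Algebra

variable {R : Type*} [CommRing R]

def k3pMatrix (x y z w : R) : Matrix (Fin 4) (Fin 4) R :=
  !![x, y, z, w; y, x, w, z; z, w, x, y; w, z, y, x]

def k3pEigenvalues (x y z w : R) : Fin 4 → R :=
  ![x + y + z + w, x - y + z - w, x + y - z - w, x - y - z + w]

theorem k3pEigenvalues_neg_sum (β γ δ : R) :
    k3pEigenvalues (-(β + γ + δ)) β γ δ = ![0, -2 * (β + δ), -2 * (γ + δ), -2 * (β + γ)] := by
  simp only [k3pEigenvalues]
  congr 1 <;> ring_nf

def hadamard4 : Matrix (Fin 4) (Fin 4) R :=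
  !![1, 1, 1, 1; 1, -1, 1, -1; 1, 1, -1, -1; 1, -1, -1, 1]

theorem hadamard4_mul_self :
    (hadamard4 : Matrix (Fin 4) (Fin 4) R) * hadamard4 = (4 : R) • 1 := by
  ext i j
  fin_cases i <;> fin_cases j <;> simp [hadamard4, mul_apply, Fin.sum_univ_four] <;> norm_num

theorem hadamard4_mul_k3pMatrix (x y z w : R) :
    hadamard4 * k3pMatrix x y z w = diagonal (k3pEigenvalues x y z w) * hadamard4 := by
  ext i j
  fin_cases i <;> fin_cases j <;>
    simp [hadamard4, k3pMatrix, k3pEigenvalues, mul_apply, Fin.sum_univ_four] <;> ring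

theorem isUnit_hadamard4 [Algebra ℚ R] : IsUnit (hadamard4 : Matrix (Fin 4) (Fin 4) R) := by
  obtain ⟨u, hu⟩ : IsUnit (4 : R) := by
    simpa only [map_ofNat] using (isUnit_iff_ne_zero.2 four_ne_zero).map (algebraMap ℚ R)
  refine .of_mul_eq_one (((u⁻¹ : Rˣ) : R) • hadamard4) ?_
  rw [mul_smul_comm, hadamard4_mul_self, smul_smul, ← hu, Units.inv_mul, one_smul]

end Algebra

section Exponential

variable {𝔸 : Type*} [NormedCommRing 𝔸] [NormedAlgebra ℚ 𝔸] [CompleteSpace 𝔸]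

open NormedSpace in
theorem hadamard4_mul_exp_k3pMatrix (x y z w : 𝔸) :
    hadamard4 * exp (k3pMatrix x y z w) = diagonal (exp (k3pEigenvalues x y z w)) * hadamard4 := by
  obtain ⟨U, hU⟩ := isUnit_hadamard4 (R := 𝔸)
  have hconj : k3pMatrix x y z w = U⁻¹ * diagonal (k3pEigenvalues x y z w) * U := by
    rw [mul_assoc, Units.eq_inv_mul_iff_mul_eq, hU, hadamard4_mul_k3pMatrix]
  rw [hconj, Matrix.exp_units_conj', exp_diagonal, ← hU, ← mul_assoc, ← mul_assoc,
    Units.mul_inv, one_mul]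

open NormedSpace in
theorem k3pMatrix_eq_exp_k3pMatrix_iff (p q r s x y z w : 𝔸) :
    k3pMatrix p q r s = exp (k3pMatrix x y z w) ↔
      k3pEigenvalues p q r s = exp (k3pEigenvalues x y z w) := by
  rw [← isUnit_hadamard4.mul_right_inj, hadamard4_mul_k3pMatrix, hadamard4_mul_exp_k3pMatrix,
    isUnit_hadamard4.mul_left_inj, diagonal_injective.eq_iff]

end Exponential

open Real in
theorem exists_nonneg_rates_iff (l₁ l₂ l₃ : ℝ) :
    (∃ β γ δ : ℝ, 0 ≤ β ∧ 0 ≤ γ ∧ 0 ≤ δ ∧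
      l₁ = exp (-2 * (β + δ)) ∧ l₂ = exp (-2 * (γ + δ)) ∧ l₃ = exp (-2 * (β + γ))) ↔
    0 < l₁ ∧ 0 < l₂ ∧ 0 < l₃ ∧ l₂ * l₃ ≤ l₁ ∧ l₁ * l₃ ≤ l₂ ∧ l₁ * l₂ ≤ l₃ := by
  constructor
  · rintro ⟨β, γ, δ, hβ, hγ, hδ, rfl, rfl, rfl⟩
    simp only [← exp_add, exp_le_exp]
    refine ⟨exp_pos _, exp_pos _, exp_pos _, ?_, ?_, ?_⟩ <;> linarith
  · rintro ⟨h₁, h₂, h₃, h₂₃, h₁₃, h₁₂⟩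
    have hlog {x y z : ℝ} (hx : 0 < x) (hy : 0 < y) (hxy : x * y ≤ z) : log x + log y ≤ log z := by
      rw [← log_mul hx.ne' hy.ne']
      exact log_le_log (mul_pos hx hy) hxy
    refine ⟨(log l₂ - log l₁ - log l₃) / 4, (log l₁ - log l₂ - log l₃) / 4,
      (log l₃ - log l₁ - log l₂) / 4, ?_, ?_, ?_, ?_, ?_, ?_⟩
    · linarith [hlog h₁ h₃ h₁₃]
    · linarith [hlog h₂ h₃ h₂₃]
    · linarith [hlog h₁ h₂ h₁₂]
    · exact (exp_log h₁).symm.trans (congrArg exp (by ring))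
    · exact (exp_log h₂).symm.trans (congrArg exp (by ring))
    · exact (exp_log h₃).symm.trans (congrArg exp (by ring))

theorem k3pMatrix_eq_exp_rateMatrix_iff {a b c d : ℝ} (hsum : a + b + c + d = 1) (β γ δ : ℝ) :
    k3pMatrix a b c d = NormedSpace.exp (k3pMatrix (-(β + γ + δ)) β γ δ) ↔
      a - b + c - d = Real.exp (-2 * (β + δ)) ∧ a + b - c - d = Real.exp (-2 * (γ + δ)) ∧
        a - b - c + d = Real.exp (-2 * (β + γ)) := by
  rw [k3pMatrix_eq_exp_k3pMatrix_iff, k3pEigenvalues_neg_sum, funext_iff]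
  simp [Fin.forall_fin_succ, k3pEigenvalues, ← Real.exp_eq_exp_ℝ, hsum]

theorem k3p_embeddable_iff_general (a b c d : ℝ)
    (hsum : a + b + c + d = 1) :
    (∃ β γ δ : ℝ, 0 ≤ β ∧ 0 ≤ γ ∧ 0 ≤ δ ∧
      !![a, b, c, d; b, a, d, c; c, d, a, b; d, c, b, a] =
        NormedSpace.exp
          !![-(β + γ + δ), β, γ, δ;
             β, -(β + γ + δ), δ, γ;
             γ, δ, -(β + γ + δ), β;
             δ, γ, β, -(β + γ + δ)]) ↔
    (0 < a - b + c - d ∧ 0 < a + b - c - d ∧ 0 < a - b - c + d ∧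
      (a + b - c - d) * (a - b - c + d) ≤ a - b + c - d ∧
      (a - b + c - d) * (a - b - c + d) ≤ a + b - c - d ∧
      (a - b + c - d) * (a + b - c - d) ≤ a - b - c + d) := by
  change (∃ β γ δ : ℝ, 0 ≤ β ∧ 0 ≤ γ ∧ 0 ≤ δ ∧
    k3pMatrix a b c d = NormedSpace.exp (k3pMatrix (-(β + γ + δ)) β γ δ)) ↔ _
  simp only [k3pMatrix_eq_exp_rateMatrix_iff hsum]
  exact exists_nonneg_rates_iff _ _ _

/-- A Kimura 3-parameter Markov matrix is K3P embeddable, i.e. the matrix exponential of a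
Kimura 3-parameter rate matrix, if and only if its nonunit eigenvalues
`λ₁ = a - b + c - d`, `λ₂ = a + b - c - d`, `λ₃ = a - b - c + d` are positive and satisfy
`λ₂λ₃ ≤ λ₁`, `λ₁λ₃ ≤ λ₂`, `λ₁λ₂ ≤ λ₃`. -/
theorem k3p_embeddable_iff (a b c d : ℝ)
    (ha : 0 ≤ a) (hb : 0 ≤ b) (hc : 0 ≤ c) (hd : 0 ≤ d) (hsum : a + b + c + d = 1) :
    (∃ β γ δ : ℝ, 0 ≤ β ∧ 0 ≤ γ ∧ 0 ≤ δ ∧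
      !![a, b, c, d; b, a, d, c; c, d, a, b; d, c, b, a] =
        NormedSpace.exp
          !![-(β + γ + δ), β, γ, δ;
             β, -(β + γ + δ), δ, γ;
             γ, δ, -(β + γ + δ), β;
             δ, γ, β, -(β + γ + δ)]) ↔
    (0 < a - b + c - d ∧ 0 < a + b - c - d ∧ 0 < a - b - c + d ∧
      (a + b - c - d) * (a - b - c + d) ≤ a - b + c - d ∧
      (a - b + c - d) * (a - b - c + d) ≤ a + b - c - d ∧
      (a - b + c - d) * (a + b - c - d) ≤ a - b - c + d) :=
  k3p_embeddable_iff_general a b c d hsum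
end

section
/- Let n ≥ 2 be a natural number and b ∈ ℝ with 0 ≤ b ≤ 1/(n−1). Let P be the n×n real matrix with diagonal entries 1 − (n−1)b and all off-diagonal entries equal to b (a general Jukes–Cantor Markov matrix). Then there exists q ≥ 0 such that P = exp(Q), where Q is the n×n matrix with diagonal entries −(n−1)q and all off-diagonal entries equal to q (a general Jukes–Cantor rate matrix), if and only if b < 1/n. -/
/-!
Let `E` be the matrix with all entries `1 / n`. It is idempotent, so `(x, y) ↦ x • E + y • (1 - E)`
is a continuous algebra map `ℝ × ℝ → Matrix`, injective for `n ≥ 2`, and it commutes with `exp`.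
The matrix with diagonal `α` and off-diagonal `β` is the image of its eigenvalue pair
`(α + (n - 1) β, α - β)`, so `P = exp Q` becomes `1 - n b = exp (-n q)`, which has a solution
`q ≥ 0` exactly when `0 < 1 - n b ≤ 1`.
-/

open NormedSpace

-- `map_exp` wants a normed codomain, and matrices carry no global norm.
theorem map_exp_of_isTopologicalRing {𝔸 𝔹 F : Type*} [NormedRing 𝔸] [NormedAlgebra ℝ 𝔸]
    [CompleteSpace 𝔸] [Ring 𝔹] [Algebra ℝ 𝔹] [TopologicalSpace 𝔹] [IsTopologicalRing 𝔹]
    [T2Space 𝔹] [FunLike F 𝔸 𝔹] [RingHomClass F 𝔸 𝔹] (f : F) (hf : Continuous f) (x : 𝔸) :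
    f (exp x) = exp (f x) := by
  rw [exp_eq_tsum ℝ, exp_eq_tsum ℝ]
  refine ((expSeries_summable' (𝕂 := ℝ) x).hasSum.map f hf).tsum_eq.symm.trans ?_
  simp_rw [Function.comp_def, map_inv_natCast_smul f ℝ ℝ, map_pow]

namespace IsIdempotentElem

variable {R A : Type*} [CommRing R] [Ring A] [Algebra R A] {e : A}

variable (R) in
def prodAlgHom (he : IsIdempotentElem e) : R × R →ₐ[R] A where
  toFun p := p.1 • e + p.2 • (1 - e)
  map_one' := by simp
  map_mul' p q := by
    simp only [Prod.fst_mul, Prod.snd_mul, add_mul, mul_add, smul_mul_smul_comm, he.eq,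
      he.mul_one_sub_self, he.one_sub_mul_self, he.one_sub.eq, smul_zero, add_zero, zero_add]
  map_zero' := by simp
  map_add' p q := by
    simp only [Prod.fst_add, Prod.snd_add, add_smul]
    abel
  commutes' r := by
    simp only [Algebra.algebraMap_eq_smul_one, Prod.smul_fst, Prod.smul_snd, Prod.fst_one,
      Prod.snd_one, smul_eq_mul, mul_one]
    module

theorem prodAlgHom_apply (he : IsIdempotentElem e) (p : R × R) :
    he.prodAlgHom R p = p.1 • e + p.2 • (1 - e) := rfl

theorem prodAlgHom_injective [IsDomain R] [Module.IsTorsionFree R A] (he : IsIdempotentElem e)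
    (h₀ : e ≠ 0) (h₁ : 1 - e ≠ 0) :
    Function.Injective (he.prodAlgHom R) := by
  intro p p' h
  have hfst : p.1 • e = p'.1 • e := by
    simpa [prodAlgHom_apply, add_mul, he.eq, he.one_sub_mul_self] using congrArg (· * e) h
  have hsnd : p.2 • (1 - e) = p'.2 • (1 - e) := by
    simpa [prodAlgHom_apply, add_mul, he.one_sub.eq, he.mul_one_sub_self] using
      congrArg (· * (1 - e)) h
  exact Prod.ext (smul_left_injective R h₀ hfst) (smul_left_injective R h₁ hsnd)

theorem exp_prodAlgHom {A : Type*} [Ring A] [Algebra ℝ A] [TopologicalSpace A]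
    [IsTopologicalRing A] [ContinuousSMul ℝ A] [T2Space A] {e : A} (he : IsIdempotentElem e)
    (x y : ℝ) :
    exp (he.prodAlgHom ℝ (x, y)) = he.prodAlgHom ℝ (Real.exp x, Real.exp y) := by
  have hcont : Continuous (he.prodAlgHom ℝ) := by
    show Continuous fun p : ℝ × ℝ => p.1 • e + p.2 • (1 - e)
    fun_prop
  rw [← map_exp_of_isTopologicalRing (he.prodAlgHom ℝ) hcont, Real.exp_eq_exp_ℝ]
  congr 1
  ext <;> simp

end IsIdempotentElem

theorem Real.exists_nonneg_eq_exp_neg_mul_iff {c s : ℝ} (hc : 0 < c) :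
    (∃ q, 0 ≤ q ∧ s = Real.exp (-(c * q))) ↔ 0 < s ∧ s ≤ 1 := by
  constructor
  · rintro ⟨q, hq, rfl⟩
    exact ⟨Real.exp_pos _, Real.exp_le_one_iff.mpr (neg_nonpos.mpr (mul_nonneg hc.le hq))⟩
  · rintro ⟨hs₀, hs₁⟩
    refine ⟨-Real.log s / c, div_nonneg (neg_nonneg.mpr (Real.log_nonpos hs₀.le hs₁)) hc.le, ?_⟩
    rw [mul_div_cancel₀ _ hc.ne', neg_neg, Real.exp_log hs₀]

namespace Matrix

variable (ι : Type*) [Fintype ι]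

noncomputable def meanProj : Matrix ι ι ℝ := of fun _ _ => (Fintype.card ι : ℝ)⁻¹

variable {ι}

theorem isIdempotentElem_meanProj : IsIdempotentElem (meanProj ι) := by
  ext i j
  have : Nonempty ι := ⟨i⟩
  simp [meanProj, mul_apply]

theorem meanProj_ne_zero [Nonempty ι] : meanProj ι ≠ 0 := by
  obtain ⟨i⟩ := ‹Nonempty ι›
  intro h
  simpa [meanProj] using congrFun₂ h i i

variable [DecidableEq ι]

theorem of_ite_eq_prodAlgHom (α β : ℝ) :
    of (fun i j : ι => if i = j then α else β) =
      isIdempotentElem_meanProj.prodAlgHom ℝ (α + (Fintype.card ι - 1) * β, α - β) := by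
  ext i j
  have : Nonempty ι := ⟨i⟩
  have hcard : (Fintype.card ι : ℝ) ≠ 0 := Nat.cast_ne_zero.mpr Fintype.card_ne_zero
  rw [IsIdempotentElem.prodAlgHom_apply]
  by_cases h : i = j <;> simp [h, meanProj] <;> field_simp <;> ring

theorem one_sub_meanProj_ne_zero [Nontrivial ι] : 1 - meanProj ι ≠ 0 := by
  obtain ⟨i, j, hij⟩ := exists_pair_ne ι
  intro h
  simpa [meanProj, one_apply, hij] using congrFun₂ h i j

theorem of_ite_eq_exp_of_ite_iff [Nontrivial ι] (α β γ δ : ℝ) :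
    of (fun i j : ι => if i = j then α else β) = exp (of fun i j : ι => if i = j then γ else δ) ↔
      α + (Fintype.card ι - 1) * β = Real.exp (γ + (Fintype.card ι - 1) * δ) ∧
        α - β = Real.exp (γ - δ) := by
  rw [of_ite_eq_prodAlgHom, of_ite_eq_prodAlgHom, IsIdempotentElem.exp_prodAlgHom,
    (isIdempotentElem_meanProj.prodAlgHom_injective meanProj_ne_zero
      one_sub_meanProj_ne_zero).eq_iff, Prod.mk.injEq]

end Matrix

theorem general_jukes_cantor_embeddable_iff_general (n : ℕ) (hn : 2 ≤ n) (b : ℝ)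
    (hb0 : 0 ≤ b) :
    (∃ q : ℝ, 0 ≤ q ∧
      (Matrix.of fun i j : Fin n => if i = j then 1 - ((n : ℝ) - 1) * b else b) =
        NormedSpace.exp
          (Matrix.of fun i j : Fin n => if i = j then -(((n : ℝ) - 1) * q) else q)) ↔
    b < 1 / (n : ℝ) := by
  have : Nontrivial (Fin n) := Fin.nontrivial_iff_two_le.mpr hn
  have hn₀ : (0 : ℝ) < n := Nat.cast_pos.mpr (by omega)
  have hrate : ∀ q : ℝ, -(((n : ℝ) - 1) * q) - q = -(n * q) := fun q => by ring
  simp only [Matrix.of_ite_eq_exp_of_ite_iff, Fintype.card_fin, sub_add_cancel, neg_add_cancel,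
    Real.exp_zero, true_and, hrate]
  rw [show 1 - ((n : ℝ) - 1) * b - b = 1 - n * b by ring,
    Real.exists_nonneg_eq_exp_neg_mul_iff hn₀, lt_div_iff₀' hn₀]
  have hnb := mul_nonneg hn₀.le hb0
  constructor
  · rintro ⟨h, -⟩
    linarith
  · intro h
    constructor <;> linarith

/-- A general Jukes–Cantor Markov matrix on `n` states, with diagonal entries `1 - (n-1)b`
and off-diagonal entries `b`, is the matrix exponential of a general Jukes–Cantor rate
matrix (diagonal `-(n-1)q`, off-diagonal `q` with `q ≥ 0`) if and only if `b < 1/n`. -/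
theorem general_jukes_cantor_embeddable_iff (n : ℕ) (hn : 2 ≤ n) (b : ℝ)
    (hb0 : 0 ≤ b) (hb1 : b ≤ 1 / ((n : ℝ) - 1)) :
    (∃ q : ℝ, 0 ≤ q ∧
      (Matrix.of fun i j : Fin n => if i = j then 1 - ((n : ℝ) - 1) * b else b) =
        NormedSpace.exp
          (Matrix.of fun i j : Fin n => if i = j then -(((n : ℝ) - 1) * q) else q)) ↔
    b < 1 / (n : ℝ) :=
  general_jukes_cantor_embeddable_iff_general n hn b hb0
end

section
/- Identify the eight states A=(0,0,0), C=(0,0,1), T=(0,1,0), G=(0,1,1), P=(1,0,0), Z=(1,0,1), S=(1,1,0), B=(1,1,1) with the elements of G = ℤ/2 × ℤ/2 × ℤ/2. Let a, b, c, d ∈ ℝ with a, b, c, d ≥ 0 and a + 4b + c + 2d = 1, and let M be the G×G matrix M_{g,h} = f(h+g), where f(A) = a, f(G) = c, f(P) = f(B) = d, and f(C) = f(T) = f(Z) = f(S) = b (a hachimoji 3-parameter Markov matrix). Set x = a − 4b + c + 2d, y = a + c − 2d, z = a − c (the nonunit eigenvalues of M). Then there exist β, γ, δ ≥ 0 such that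 M = exp(Q), where Q_{g,h} = ψ(h+g) with ψ(A) = −(4β + γ + 2δ), ψ(G) = γ, ψ(P) = ψ(B) = δ, and ψ equal to β on the remaining four elements (a hachimoji 3-parameter rate matrix), if and only if 0 < x ≤ 1, y > 0, z > 0, y² ≤ x, and z⁴ ≤ x·y². -/
/-- The group `ℤ/2 × ℤ/2 × ℤ/2` underlying the hachimoji models, with states
`A=(0,0,0), C=(0,0,1), T=(0,1,0), G=(0,1,1), P=(1,0,0), Z=(1,0,1), S=(1,1,0), B=(1,1,1)`. -/
abbrev HachimojiGroup := ZMod 2 × ZMod 2 × ZMod 2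

/-!
Group-based matrices on `ℤ/2 × ℤ/2 × ℤ/2` are simultaneously diagonalised by the Hadamard
matrix of real characters: the eigenvalue of `(f (h + g))_{g,h}` on the character `u` is the
Fourier coefficient `f̂ u`. Hence `M = exp Q` exactly when `f̂ = exp ∘ ψ̂`. The Fourier transform
sends an H3P labeling with class values `a, b, c, d` to the H3P labeling with class values
`1, z, x, y`, so embeddability means solving `x = e^{-8β}`, `y = e^{-4β-4δ}`,
`z = e^{-4β-2γ-2δ}` with `β, γ, δ ≥ 0`; taking logarithms, this is the system of inequalities.
-/

namespace Hachimoji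

open Matrix Real

lemma HachimojiGroup.eq_or (g : HachimojiGroup) :
    g = (0, 0, 0) ∨ g = (0, 0, 1) ∨ g = (0, 1, 0) ∨ g = (0, 1, 1) ∨
      g = (1, 0, 0) ∨ g = (1, 0, 1) ∨ g = (1, 1, 0) ∨ g = (1, 1, 1) := by
  revert g; decide

lemma HachimojiGroup.sum_univ (F : HachimojiGroup → ℝ) :
    ∑ u, F u = F (0, 0, 0) + F (0, 0, 1) + F (0, 1, 0) + F (0, 1, 1)
      + F (1, 0, 0) + F (1, 0, 1) + F (1, 1, 0) + F (1, 1, 1) := by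
  simp only [Fintype.sum_prod_type]
  rw [show (Finset.univ : Finset (ZMod 2)) = {0, 1} from rfl]
  simp only [Finset.sum_pair zero_ne_one]
  ring

def dot (u g : HachimojiGroup) : ZMod 2 := u.1 * g.1 + u.2.1 * g.2.1 + u.2.2 * g.2.2

noncomputable def character (u g : HachimojiGroup) : ℝ := if dot u g = 0 then 1 else -1

lemma character_comm (u g : HachimojiGroup) : character u g = character g u := by
  rw [character, character, show dot u g = dot g u by simp only [dot]; ring]

lemma character_add (u g h : HachimojiGroup) :
    character u (g + h) = character u g * character u h := by
  have hdot : dot u (g + h) = dot u g + dot u h := by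
    simp only [dot, Prod.fst_add, Prod.snd_add]; ring
  have h01 : ∀ x : ZMod 2, x = 0 ∨ x = 1 := by decide
  simp only [character, hdot]
  rcases h01 (dot u g) with hg | hg <;> rcases h01 (dot u h) with hh | hh <;>
    simp +decide [hg, hh]

lemma character_mul_self (u g : HachimojiGroup) : character u g * character u g = 1 := by
  unfold character; split_ifs <;> norm_num

lemma sum_character (g : HachimojiGroup) : ∑ u, character u g = if g = 0 then 8 else 0 := by
  rcases HachimojiGroup.eq_or g with rfl | rfl | rfl | rfl | rfl | rfl | rfl | rfl <;>
    norm_num +decide [HachimojiGroup.sum_univ, character]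

noncomputable def hadamard : Matrix HachimojiGroup HachimojiGroup ℝ := of character

lemma hadamard_mul_hadamard : hadamard * hadamard = (8 : ℝ) • 1 := by
  ext g h
  simp only [hadamard, mul_apply, of_apply, character_comm g, ← character_add, sum_character,
    Matrix.smul_apply, Matrix.one_apply]
  have hgh : g + h = 0 ↔ g = h := CharTwo.add_eq_zero
  simp [hgh]

lemma isUnit_hadamard : IsUnit hadamard :=
  IsUnit.of_mul_eq_one ((8 : ℝ)⁻¹ • hadamard) (by
    rw [mul_smul_comm, hadamard_mul_hadamard, smul_smul]; norm_num)

noncomputable def fourier (f : HachimojiGroup → ℝ) (u : HachimojiGroup) : ℝ :=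
  ∑ g, character u g * f g

def groupMatrix (f : HachimojiGroup → ℝ) : Matrix HachimojiGroup HachimojiGroup ℝ :=
  of fun g h => f (h + g)

lemma groupMatrix_mul_hadamard (f : HachimojiGroup → ℝ) :
    groupMatrix f * hadamard = hadamard * diagonal (fourier f) := by
  ext g u
  rw [mul_diagonal]
  simp only [groupMatrix, hadamard, mul_apply, of_apply, fourier, Finset.mul_sum]
  refine Fintype.sum_equiv (Equiv.addRight g) _ _ fun h => ?_
  rw [Equiv.coe_addRight, character_add, character_comm u h, character_comm u g]
  linear_combination (-(f (h + g) * character h u)) * character_mul_self g u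

lemma groupMatrix_eq_conj (f : HachimojiGroup → ℝ) :
    groupMatrix f = hadamard * diagonal (fourier f) * hadamard⁻¹ := by
  rw [← groupMatrix_mul_hadamard, Matrix.mul_assoc,
    mul_nonsing_inv _ ((isUnit_iff_isUnit_det _).mp isUnit_hadamard), Matrix.mul_one]

lemma exp_groupMatrix (f : HachimojiGroup → ℝ) :
    NormedSpace.exp (groupMatrix f) = hadamard * diagonal (exp ∘ fourier f) * hadamard⁻¹ := by
  rw [groupMatrix_eq_conj, exp_conj _ _ isUnit_hadamard, exp_diagonal, exp_eq_exp_ℝ,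
    Pi.exp_def]
  rfl

lemma groupMatrix_eq_exp_groupMatrix_iff (f ψ : HachimojiGroup → ℝ) :
    groupMatrix f = NormedSpace.exp (groupMatrix ψ) ↔ fourier f = exp ∘ fourier ψ := by
  rw [exp_groupMatrix, groupMatrix_eq_conj,
    (isUnit_nonsing_inv_iff.mpr isUnit_hadamard).mul_left_inj, isUnit_hadamard.mul_right_inj,
    diagonal_injective.eq_iff]

def h3p (a b c d : ℝ) (g : HachimojiGroup) : ℝ :=
  if g = (0, 0, 0) then a else if g = (0, 1, 1) then c
  else if g = (1, 0, 0) ∨ g = (1, 1, 1) then d else b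

lemma eq_h3p {f : HachimojiGroup → ℝ} {a b c d : ℝ}
    (hA : f (0, 0, 0) = a) (hC : f (0, 0, 1) = b) (hT : f (0, 1, 0) = b)
    (hG : f (0, 1, 1) = c) (hP : f (1, 0, 0) = d) (hZ : f (1, 0, 1) = b)
    (hS : f (1, 1, 0) = b) (hB : f (1, 1, 1) = d) : f = h3p a b c d := by
  funext g
  rcases HachimojiGroup.eq_or g with rfl | rfl | rfl | rfl | rfl | rfl | rfl | rfl <;>
    simp +decide [h3p, *]

lemma exists_h3p_and_iff {a b c d : ℝ} {P : (HachimojiGroup → ℝ) → Prop} :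
    (∃ ψ : HachimojiGroup → ℝ, ψ (0, 0, 0) = a ∧ ψ (0, 0, 1) = b ∧ ψ (0, 1, 0) = b ∧
      ψ (0, 1, 1) = c ∧ ψ (1, 0, 0) = d ∧ ψ (1, 0, 1) = b ∧ ψ (1, 1, 0) = b ∧
      ψ (1, 1, 1) = d ∧ P ψ) ↔ P (h3p a b c d) := by
  constructor
  · rintro ⟨ψ, hA, hC, hT, hG, hP, hZ, hS, hB, hψ⟩
    rwa [← eq_h3p hA hC hT hG hP hZ hS hB]
  · exact fun h => ⟨h3p a b c d, rfl, rfl, rfl, rfl, rfl, rfl, rfl, rfl, h⟩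

lemma h3p_inj {a b c d a' b' c' d' : ℝ} :
    h3p a b c d = h3p a' b' c' d' ↔ a = a' ∧ b = b' ∧ c = c' ∧ d = d' := by
  refine ⟨fun h => ⟨congrFun h (0, 0, 0), congrFun h (0, 0, 1), congrFun h (0, 1, 1),
    congrFun h (1, 0, 0)⟩, ?_⟩
  rintro ⟨rfl, rfl, rfl, rfl⟩
  rfl

lemma comp_h3p (φ : ℝ → ℝ) (a b c d : ℝ) : φ ∘ h3p a b c d = h3p (φ a) (φ b) (φ c) (φ d) := by
  funext g
  simp only [Function.comp_apply, h3p]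
  split_ifs <;> rfl

lemma fourier_h3p (a b c d : ℝ) :
    fourier (h3p a b c d) =
      h3p (a + 4 * b + c + 2 * d) (a - c) (a - 4 * b + c + 2 * d) (a + c - 2 * d) := by
  funext u
  simp only [fourier, HachimojiGroup.sum_univ]
  rcases HachimojiGroup.eq_or u with rfl | rfl | rfl | rfl | rfl | rfl | rfl | rfl <;>
    simp +decide [character, h3p] <;> ring

lemma fourier_h3p_rate (β γ δ : ℝ) :
    fourier (h3p (-(4 * β + γ + 2 * δ)) β γ δ) =
      h3p 0 (-(4 * β + 2 * γ + 2 * δ)) (-(8 * β)) (-(4 * β + 4 * δ)) := by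
  rw [fourier_h3p, h3p_inj]
  refine ⟨?_, ?_, ?_, ?_⟩ <;> ring

lemma exists_exp_eq_iff (x y z : ℝ) :
    (∃ β γ δ : ℝ, 0 ≤ β ∧ 0 ≤ γ ∧ 0 ≤ δ ∧
      z = exp (-(4 * β + 2 * γ + 2 * δ)) ∧ x = exp (-(8 * β)) ∧ y = exp (-(4 * β + 4 * δ))) ↔
    0 < x ∧ x ≤ 1 ∧ 0 < y ∧ 0 < z ∧ y ^ 2 ≤ x ∧ z ^ 4 ≤ x * y ^ 2 := by
  constructor
  · rintro ⟨β, γ, δ, hβ, hγ, hδ, rfl, rfl, rfl⟩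
    refine ⟨exp_pos _, exp_le_one_iff.mpr (by linarith), exp_pos _, exp_pos _, ?_, ?_⟩
    · rw [← exp_nat_mul]
      exact exp_le_exp.mpr (by push_cast; linarith)
    · rw [← exp_nat_mul, ← exp_nat_mul, ← exp_add]
      exact exp_le_exp.mpr (by push_cast; linarith)
  · rintro ⟨hx, hx1, hy, hz, hyx, hzxy⟩
    have hlx : log x ≤ 0 := log_nonpos hx.le hx1
    have hly : 2 * log y ≤ log x := by
      have := log_le_log (by positivity) hyx
      rwa [log_pow, Nat.cast_ofNat] at this
    have hlz : 4 * log z ≤ log x + 2 * log y := by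
      have := log_le_log (by positivity) hzxy
      rwa [log_mul hx.ne' (by positivity), log_pow, log_pow, Nat.cast_ofNat,
        Nat.cast_ofNat] at this
    -- the solution of the linear system `log x = -8β`, `log y = -4β-4δ`, `log z = -4β-2γ-2δ`
    refine ⟨-log x / 8, (log x + 2 * log y - 4 * log z) / 8, (log x - 2 * log y) / 8,
      by linarith, by linarith, by linarith, ?_, ?_, ?_⟩
    · exact (exp_log hz).symm.trans (congrArg exp (by ring))
    · exact (exp_log hx).symm.trans (congrArg exp (by ring))
    · exact (exp_log hy).symm.trans (congrArg exp (by ring))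

end Hachimoji

open Hachimoji

theorem h3p_embeddable_iff_general (a b c d : ℝ)
    (hsum : a + 4 * b + c + 2 * d = 1)
    (f : HachimojiGroup → ℝ)
    (hfA : f (0, 0, 0) = a) (hfC : f (0, 0, 1) = b) (hfT : f (0, 1, 0) = b)
    (hfG : f (0, 1, 1) = c) (hfP : f (1, 0, 0) = d) (hfZ : f (1, 0, 1) = b)
    (hfS : f (1, 1, 0) = b) (hfB : f (1, 1, 1) = d)
    (M : Matrix HachimojiGroup HachimojiGroup ℝ)
    (hM : ∀ g h : HachimojiGroup, M g h = f (h + g)) :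
    (∃ β γ δ : ℝ, 0 ≤ β ∧ 0 ≤ γ ∧ 0 ≤ δ ∧
      ∃ ψ : HachimojiGroup → ℝ,
        ψ (0, 0, 0) = -(4 * β + γ + 2 * δ) ∧ ψ (0, 0, 1) = β ∧ ψ (0, 1, 0) = β ∧
        ψ (0, 1, 1) = γ ∧ ψ (1, 0, 0) = δ ∧ ψ (1, 0, 1) = β ∧
        ψ (1, 1, 0) = β ∧ ψ (1, 1, 1) = δ ∧
        M = NormedSpace.exp (Matrix.of fun g h : HachimojiGroup => ψ (h + g))) ↔
    (0 < a - 4 * b + c + 2 * d ∧ a - 4 * b + c + 2 * d ≤ 1 ∧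
      0 < a + c - 2 * d ∧ 0 < a - c ∧
      (a + c - 2 * d) ^ 2 ≤ a - 4 * b + c + 2 * d ∧
      (a - c) ^ 4 ≤ (a - 4 * b + c + 2 * d) * (a + c - 2 * d) ^ 2) := by
  have hMf : M = groupMatrix (h3p a b c d) := by
    rw [← eq_h3p hfA hfC hfT hfG hfP hfZ hfS hfB]
    exact Matrix.ext hM
  have hrate (β γ δ : ℝ) :
      M = NormedSpace.exp (groupMatrix (h3p (-(4 * β + γ + 2 * δ)) β γ δ)) ↔
        a - c = Real.exp (-(4 * β + 2 * γ + 2 * δ)) ∧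
          a - 4 * b + c + 2 * d = Real.exp (-(8 * β)) ∧
          a + c - 2 * d = Real.exp (-(4 * β + 4 * δ)) := by
    rw [hMf, groupMatrix_eq_exp_groupMatrix_iff, fourier_h3p, fourier_h3p_rate, comp_h3p,
      h3p_inj, Real.exp_zero, hsum, eq_self_iff_true, true_and]
  simp only [exists_h3p_and_iff]
  rw [← exists_exp_eq_iff]
  exact exists_congr fun β => exists_congr fun γ => exists_congr fun δ =>
    and_congr_right fun _ => and_congr_right fun _ => and_congr_right fun _ => hrate β γ δ

/-- A hachimoji 3-parameter Markov matrix `M`, with `M g h = f (h + g)` where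
`f(A) = a`, `f(G) = c`, `f(P) = f(B) = d` and `f = b` on the remaining four elements,
is H3P embeddable, i.e. the matrix exponential of a hachimoji 3-parameter rate matrix,
if and only if its nonunit eigenvalues `x = a - 4b + c + 2d`, `y = a + c - 2d`, `z = a - c`
satisfy `0 < x ≤ 1`, `y > 0`, `z > 0`, `y² ≤ x` and `z⁴ ≤ x·y²`. -/
theorem h3p_embeddable_iff (a b c d : ℝ)
    (ha : 0 ≤ a) (hb : 0 ≤ b) (hc : 0 ≤ c) (hd : 0 ≤ d)
    (hsum : a + 4 * b + c + 2 * d = 1)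
    (f : HachimojiGroup → ℝ)
    (hfA : f (0, 0, 0) = a) (hfC : f (0, 0, 1) = b) (hfT : f (0, 1, 0) = b)
    (hfG : f (0, 1, 1) = c) (hfP : f (1, 0, 0) = d) (hfZ : f (1, 0, 1) = b)
    (hfS : f (1, 1, 0) = b) (hfB : f (1, 1, 1) = d)
    (M : Matrix HachimojiGroup HachimojiGroup ℝ)
    (hM : ∀ g h : HachimojiGroup, M g h = f (h + g)) :
    (∃ β γ δ : ℝ, 0 ≤ β ∧ 0 ≤ γ ∧ 0 ≤ δ ∧
      ∃ ψ : HachimojiGroup → ℝ,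
        ψ (0, 0, 0) = -(4 * β + γ + 2 * δ) ∧ ψ (0, 0, 1) = β ∧ ψ (0, 1, 0) = β ∧
        ψ (0, 1, 1) = γ ∧ ψ (1, 0, 0) = δ ∧ ψ (1, 0, 1) = β ∧
        ψ (1, 1, 0) = β ∧ ψ (1, 1, 1) = δ ∧
        M = NormedSpace.exp (Matrix.of fun g h : HachimojiGroup => ψ (h + g))) ↔
    (0 < a - 4 * b + c + 2 * d ∧ a - 4 * b + c + 2 * d ≤ 1 ∧
      0 < a + c - 2 * d ∧ 0 < a - c ∧
      (a + c - 2 * d) ^ 2 ≤ a - 4 * b + c + 2 * d ∧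
      (a - c) ^ 4 ≤ (a - 4 * b + c + 2 * d) * (a + c - 2 * d) ^ 2) :=
  h3p_embeddable_iff_general a b c d hsum f hfA hfC hfT hfG hfP hfZ hfS hfB M hM
end

section
/- The Lebesgue volume of the set Δ = { (x, y, z) ∈ ℝ³ : x ≤ 1, 1 + x + 2y + 4z ≥ 0, 1 + x + 2y − 4z ≥ 0, 1 + x − 2y ≥ 0 } equals 4/3. -/
/-!
By Cavalieri's principle. For `x ∈ [-1, 1]` the slice of `Δ` is the triangle
`{(y, z) : |y| ≤ (1 + x)/2, |4z| ≤ 1 + x + 2y}`, whose own slices are intervals of length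
`y + (1 + x)/2`; so the triangle has area `(1 + x)²/2`, and `∫₋₁¹ (1 + x)²/2 dx = 4/3`.
For `x ∉ [-1, 1]` the slice is empty.
-/

open MeasureTheory Set

def hachimojiDelta : Set (ℝ × ℝ × ℝ) :=
  {p | p.1 ≤ 1 ∧ 0 ≤ 1 + p.1 + 2 * p.2.1 + 4 * p.2.2 ∧
    0 ≤ 1 + p.1 + 2 * p.2.1 - 4 * p.2.2 ∧ 0 ≤ 1 + p.1 - 2 * p.2.1}

lemma measurableSet_hachimojiDelta : MeasurableSet hachimojiDelta := by
  simp only [hachimojiDelta, ofPred_and]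
  refine .inter ?_ (.inter ?_ (.inter ?_ ?_)) <;> exact measurableSet_le (by fun_prop) (by fun_prop)

lemma volume_eq_setLIntegral_Icc_of_preimage_mk {α : Type*} [MeasureSpace α]
    [SFinite (volume : Measure α)] {s : Set (ℝ × α)} (hs : MeasurableSet s) {a b : ℝ}
    {f : ℝ → ENNReal} (h_out : ∀ x ∉ Icc a b, Prod.mk x ⁻¹' s = ∅)
    (h_in : ∀ x ∈ Icc a b, volume (Prod.mk x ⁻¹' s) = f x) :
    volume s = ∫⁻ x in Icc a b, f x := by
  rw [Measure.volume_eq_prod, Measure.prod_apply hs, ← lintegral_indicator measurableSet_Icc]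
  refine lintegral_congr fun x => ?_
  by_cases hx : x ∈ Icc a b
  · rw [indicator_of_mem hx, h_in x hx]
  · rw [indicator_of_notMem hx, h_out x hx, measure_empty]

lemma setLIntegral_Icc_ofReal_mul_sub_pow {a b c : ℝ} (hab : a ≤ b) (hc : 0 ≤ c) (n : ℕ) :
    ∫⁻ y in Icc a b, ENNReal.ofReal (c * (y - a) ^ n) =
      ENNReal.ofReal (c * (b - a) ^ (n + 1) / (n + 1)) := by
  have h_nonneg : 0 ≤ᵐ[volume.restrict (Icc a b)] fun y => c * (y - a) ^ n := by
    filter_upwards [ae_restrict_mem measurableSet_Icc] with y hy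
    exact mul_nonneg hc (pow_nonneg (sub_nonneg.2 hy.1) n)
  rw [← ofReal_integral_eq_lintegral_ofReal
    (by fun_prop : Continuous fun y => c * (y - a) ^ n).integrableOn_Icc
    h_nonneg, integral_Icc_eq_integral_Ioc, ← intervalIntegral.integral_of_le hab,
    intervalIntegral.integral_const_mul,
    intervalIntegral.integral_comp_sub_right (fun y => y ^ n), integral_pow]
  simp [mul_div_assoc]

section Slices

variable {x y : ℝ}

lemma preimage_mk_hachimojiDelta_of_notMem (hx : x ∉ Icc (-1) 1) :
    Prod.mk x ⁻¹' hachimojiDelta = ∅ := by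
  refine eq_empty_of_forall_notMem fun q ⟨h1, h2, h3, h4⟩ => hx ⟨?_, h1⟩
  linarith

lemma preimage_mk_mk_hachimojiDelta_of_notMem (hy : y ∉ Icc (-(1 + x) / 2) ((1 + x) / 2)) :
    Prod.mk y ⁻¹' (Prod.mk x ⁻¹' hachimojiDelta) = ∅ := by
  refine eq_empty_of_forall_notMem fun z ⟨_, h2, h3, h4⟩ => hy ⟨?_, ?_⟩ <;> linarith

lemma preimage_mk_mk_hachimojiDelta (hx : x ≤ 1) (hy : 2 * y ≤ 1 + x) :
    Prod.mk y ⁻¹' (Prod.mk x ⁻¹' hachimojiDelta) =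
      Icc (-(1 + x + 2 * y) / 4) ((1 + x + 2 * y) / 4) := by
  ext z
  simp only [hachimojiDelta, mem_preimage, mem_ofPred_eq, mem_Icc]
  constructor
  · rintro ⟨_, h2, h3, _⟩
    constructor <;> linarith
  · rintro ⟨h2, h3⟩
    exact ⟨hx, by linarith, by linarith, by linarith⟩

lemma volume_preimage_mk_mk_hachimojiDelta (hx : x ≤ 1)
    (hy : y ∈ Icc (-(1 + x) / 2) ((1 + x) / 2)) :
    volume (Prod.mk y ⁻¹' (Prod.mk x ⁻¹' hachimojiDelta)) =
      ENNReal.ofReal (1 * (y - -(1 + x) / 2) ^ 1) := by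
  rw [preimage_mk_mk_hachimojiDelta hx (by linarith [hy.2]), Real.volume_Icc]
  ring_nf

lemma volume_preimage_mk_hachimojiDelta (hx : x ∈ Icc (-1) 1) :
    volume (Prod.mk x ⁻¹' hachimojiDelta) = ENNReal.ofReal (1 / 2 * (x - -1) ^ 2) := by
  rw [volume_eq_setLIntegral_Icc_of_preimage_mk
      (measurable_prodMk_left measurableSet_hachimojiDelta)
      (fun _ => preimage_mk_mk_hachimojiDelta_of_notMem)
      (fun _ => volume_preimage_mk_mk_hachimojiDelta hx.2),
    setLIntegral_Icc_ofReal_mul_sub_pow (by linarith [hx.1]) zero_le_one]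
  ring_nf

end Slices

/-- The Lebesgue volume of the eigenvalue parameterization `Δ` of the hachimoji 3-parameter
Markov matrices equals `4/3`. -/
theorem h3p_volume_markov :
    MeasureTheory.volume {p : ℝ × ℝ × ℝ |
      p.1 ≤ 1 ∧ 0 ≤ 1 + p.1 + 2 * p.2.1 + 4 * p.2.2 ∧
      0 ≤ 1 + p.1 + 2 * p.2.1 - 4 * p.2.2 ∧ 0 ≤ 1 + p.1 - 2 * p.2.1} =
    ENNReal.ofReal (4 / 3) := by
  change volume hachimojiDelta = _
  rw [volume_eq_setLIntegral_Icc_of_preimage_mk measurableSet_hachimojiDelta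
      (fun _ => preimage_mk_hachimojiDelta_of_notMem)
      (fun _ => volume_preimage_mk_hachimojiDelta),
    setLIntegral_Icc_ofReal_mul_sub_pow (by norm_num) (by norm_num)]
  norm_num
end

section
/- The Lebesgue volume of the set Δ_me = { (x, y, z) ∈ ℝ³ : 0 < x ≤ 1, 0 < y, 0 < z, y² ≤ x, z⁴ ≤ x·y² } equals 1/3. -/
/-! Slicing by Fubini at `x ∈ (0, 1]` and then at `y ∈ (0, √x]` leaves the interval
`(0, (x y²)^(1/4)]`, so the volume is
`∫₀¹ ∫₀^√x x^(1/4) y^(1/2) dy dx = ∫₀¹ (2/3) x dx = 1/3`. -/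

open MeasureTheory Set

theorem MeasureTheory.Measure.prod_fst_preimage_inter_apply {α β : Type*} [MeasurableSpace α]
    [MeasurableSpace β] (μ : Measure α) (ν : Measure β) [SFinite ν] {s : Set α}
    {t : Set (α × β)} (hs : MeasurableSet s) (ht : MeasurableSet t) :
    μ.prod ν (Prod.fst ⁻¹' s ∩ t) = ∫⁻ x in s, ν (Prod.mk x ⁻¹' t) ∂μ := by
  rw [Measure.prod_apply (measurable_fst hs |>.inter ht), ← lintegral_indicator hs]
  congr 1 with x
  by_cases hx : x ∈ s <;>
    simp [hx, preimage_preimage, preimage_const_of_mem, preimage_const_of_notMem]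

theorem Real.volume_setOf_pos_pow_le {n : ℕ} (hn : n ≠ 0) {c : ℝ} (hc : 0 ≤ c) :
    volume {z : ℝ | 0 < z ∧ z ^ n ≤ c} = ENNReal.ofReal (c ^ (n⁻¹ : ℝ)) := by
  have : {z : ℝ | 0 < z ∧ z ^ n ≤ c} = Ioc 0 (c ^ (n⁻¹ : ℝ)) := by
    ext z
    simp only [mem_ofPred_eq, mem_Ioc, and_congr_right_iff]
    intro hz
    rw [Real.le_rpow_inv_iff_of_pos hz.le hc (by positivity), Real.rpow_natCast]
  rw [this, Real.volume_Ioc, sub_zero]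

theorem Real.lintegral_Ioc_ofReal_rpow {a r : ℝ} (ha : 0 ≤ a) (hr : -1 < r) :
    ∫⁻ y in Ioc 0 a, ENNReal.ofReal (y ^ r) = ENNReal.ofReal (a ^ (r + 1) / (r + 1)) := by
  have hint : IntegrableOn (fun y : ℝ => y ^ r) (Ioc 0 a) :=
    (intervalIntegral.intervalIntegrable_rpow' hr).1
  rw [← ofReal_integral_eq_lintegral_ofReal hint, ← intervalIntegral.integral_of_le ha,
    integral_rpow (Or.inl hr), Real.zero_rpow (by linarith), sub_zero]
  filter_upwards [ae_restrict_mem measurableSet_Ioc] with y hy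
  exact Real.rpow_nonneg hy.1.le r

theorem volume_embeddable_fiber {x : ℝ} (hx : 0 ≤ x) :
    volume {q : ℝ × ℝ | 0 < q.1 ∧ 0 < q.2 ∧ q.1 ^ 2 ≤ x ∧ q.2 ^ 4 ≤ x * q.1 ^ 2} =
      ENNReal.ofReal (2 / 3 * x) := by
  have hset : {q : ℝ × ℝ | 0 < q.1 ∧ 0 < q.2 ∧ q.1 ^ 2 ≤ x ∧ q.2 ^ 4 ≤ x * q.1 ^ 2} =
      Prod.fst ⁻¹' Ioc 0 √x ∩ {q | 0 < q.2 ∧ q.2 ^ 4 ≤ x * q.1 ^ 2} := by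
    ext ⟨y, z⟩
    simp only [mem_ofPred_eq, mem_inter_iff, mem_preimage, mem_Ioc]
    constructor
    · rintro ⟨hy, hz, hyx, hzy⟩
      exact ⟨⟨hy, (Real.le_sqrt' hy).mpr hyx⟩, hz, hzy⟩
    · rintro ⟨⟨hy, hyx⟩, hz, hzy⟩
      exact ⟨hy, hz, (Real.le_sqrt' hy).mp hyx, hzy⟩
  have hfiber : ∀ y ∈ Ioc 0 √x, volume {z : ℝ | 0 < z ∧ z ^ 4 ≤ x * y ^ 2} =
      ENNReal.ofReal (x ^ (4⁻¹ : ℝ)) * ENNReal.ofReal (y ^ (2⁻¹ : ℝ)) := by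
    intro y hy
    rw [Real.volume_setOf_pos_pow_le four_ne_zero (by positivity),
      ← ENNReal.ofReal_mul (by positivity), Real.mul_rpow hx (by positivity),
      ← Real.rpow_natCast y 2, ← Real.rpow_mul hy.1.le]
    norm_num
  rw [hset, Measure.volume_eq_prod,
    Measure.prod_fst_preimage_inter_apply _ _ measurableSet_Ioc (by measurability)]
  refine (setLIntegral_congr_fun measurableSet_Ioc hfiber).trans ?_
  rw [lintegral_const_mul _ (by measurability),
    Real.lintegral_Ioc_ofReal_rpow (Real.sqrt_nonneg x) (by norm_num),
    ← ENNReal.ofReal_mul (by positivity)]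
  congr 1
  rw [Real.sqrt_eq_rpow, ← Real.rpow_mul hx, ← mul_div_assoc,
    ← Real.rpow_add' hx (by norm_num)]
  norm_num
  ring

/-- The Lebesgue volume of the eigenvalue parameterization `Δ_me` of the model embeddable
hachimoji 3-parameter Markov matrices equals `1/3`. -/
theorem h3p_volume_embeddable :
    MeasureTheory.volume {p : ℝ × ℝ × ℝ |
      0 < p.1 ∧ p.1 ≤ 1 ∧ 0 < p.2.1 ∧ 0 < p.2.2 ∧
      p.2.1 ^ 2 ≤ p.1 ∧ p.2.2 ^ 4 ≤ p.1 * p.2.1 ^ 2} =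
    ENNReal.ofReal (1 / 3) := by
  have hset : {p : ℝ × ℝ × ℝ | 0 < p.1 ∧ p.1 ≤ 1 ∧ 0 < p.2.1 ∧ 0 < p.2.2 ∧
      p.2.1 ^ 2 ≤ p.1 ∧ p.2.2 ^ 4 ≤ p.1 * p.2.1 ^ 2} = Prod.fst ⁻¹' Ioc 0 1 ∩
      {p | 0 < p.2.1 ∧ 0 < p.2.2 ∧ p.2.1 ^ 2 ≤ p.1 ∧ p.2.2 ^ 4 ≤ p.1 * p.2.1 ^ 2} := by
    ext p
    simp only [mem_ofPred_eq, mem_inter_iff, mem_preimage, mem_Ioc, and_assoc]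
  have hfiber : ∀ x ∈ Ioc (0 : ℝ) 1, volume {q : ℝ × ℝ |
      0 < q.1 ∧ 0 < q.2 ∧ q.1 ^ 2 ≤ x ∧ q.2 ^ 4 ≤ x * q.1 ^ 2} =
      ENNReal.ofReal (2 / 3) * ENNReal.ofReal (x ^ (1 : ℝ)) := by
    intro x hx
    rw [volume_embeddable_fiber hx.1.le, Real.rpow_one, ENNReal.ofReal_mul (by norm_num)]
  rw [hset, Measure.volume_eq_prod,
    Measure.prod_fst_preimage_inter_apply _ _ measurableSet_Ioc (by measurability)]
  refine (setLIntegral_congr_fun measurableSet_Ioc hfiber).trans ?_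
  rw [lintegral_const_mul _ (by measurability),
    Real.lintegral_Ioc_ofReal_rpow zero_le_one (by norm_num), ← ENNReal.ofReal_mul (by norm_num)]
  norm_num
end

section
/- Let G = ℤ/2 × ℤ/2 × ℤ/2, and for g, h ∈ G write ⟨g,h⟩ ∈ ℤ/2 for the sum of the coordinatewise products of g and h, and set ε(g,h) = 1 if ⟨g,h⟩ = 0 and ε(g,h) = −1 otherwise. The Lebesgue volume of the set Δ_dd = { λ : {g ∈ G : g ≠ 0} → ℝ | for every g ∈ G, 1 + ∑_{h≠0} ε(g,h)·λ_h ≥ 0, and ∑_{h≠0} λ_h ≥ 3 } (a subset of ℝ⁷) equals 2/315. -/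
/-- The sum of the coordinatewise products of `g` and `h`, an element of `ℤ/2`. -/
def hachimojiPairing (g h : HachimojiGroup) : ZMod 2 :=
  g.1 * h.1 + g.2.1 * h.2.1 + g.2.2 * h.2.2

/-- `ε(g,h) = (-1)^⟨g,h⟩`, the entries of the discrete Fourier transform matrix of
`ℤ/2 × ℤ/2 × ℤ/2`. -/
noncomputable def hachimojiEps (g h : HachimojiGroup) : ℝ :=
  if hachimojiPairing g h = 0 then 1 else -1

/-!
Let `M = (ε(g,h))_{g,h ≠ 0}` and `μ = Mλ`. The rows `g ≠ 0` of the defining inequalities of `Δ_dd`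
read `μ_g ≥ -1`, the row `g = 0` is implied by `∑ λ ≥ 3`, and `∑_g μ_g = -∑_h λ_h` because every
nontrivial character of `G` sums to zero. So the affine bijection `λ ↦ Mλ + 1` maps `Δ_dd` onto
the corner simplex `{ν ≥ 0, ∑ ν ≤ 4}`, whose volume `4⁷/7!` follows from Fubini by slicing off one
coordinate at a time. Orthogonality of characters gives `M² = 8I - J`, whence
`(det M)² = 8⁶` and `vol Δ_dd = 4⁷ / (7! · 512) = 2/315`.
-/

open MeasureTheory Set
open scoped Matrix

def solidSimplex (ι : Type*) [Fintype ι] (r : ℝ) : Set (ι → ℝ) :=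
  {x | (∀ i, 0 ≤ x i) ∧ ∑ i, x i ≤ r}

lemma isClosed_solidSimplex (ι : Type*) [Fintype ι] (r : ℝ) : IsClosed (solidSimplex ι r) := by
  simp only [solidSimplex, ofPred_and, ofPred_forall]
  exact (isClosed_iInter fun i => isClosed_le continuous_const (continuous_apply i)).inter
    (isClosed_le (continuous_finsetSum _ fun i _ => continuous_apply i) continuous_const)

lemma solidSimplex_eq_empty {ι : Type*} [Fintype ι] {r : ℝ} (hr : r < 0) : solidSimplex ι r = ∅ :=
  eq_empty_of_forall_notMem fun _ ⟨hx, hsum⟩ =>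
    hr.not_ge ((Finset.sum_nonneg fun i _ => hx i).trans hsum)

lemma cons_mem_solidSimplex_iff {n : ℕ} {r t : ℝ} {y : Fin n → ℝ} :
    Fin.cons t y ∈ solidSimplex (Fin (n + 1)) r ↔ 0 ≤ t ∧ y ∈ solidSimplex (Fin n) (r - t) := by
  simp only [solidSimplex, mem_ofPred_eq, Fin.forall_fin_succ, Fin.sum_univ_succ, Fin.cons_zero,
    Fin.cons_succ, le_sub_iff_add_le', and_assoc]

lemma prodMk_preimage_piFinSuccAbove_symm_preimage_solidSimplex (n : ℕ) (r t : ℝ) :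
    Prod.mk t ⁻¹' ((MeasurableEquiv.piFinSuccAbove (fun _ => ℝ) 0).symm ⁻¹'
      solidSimplex (Fin (n + 1)) r) = if 0 ≤ t then solidSimplex (Fin n) (r - t) else ∅ := by
  ext y
  simp only [mem_preimage, MeasurableEquiv.piFinSuccAbove_symm_apply, Fin.insertNthEquiv_zero]
  change (Fin.cons t y : Fin (n + 1) → ℝ) ∈ _ ↔ _
  rw [cons_mem_solidSimplex_iff]
  split_ifs with ht <;> simp [ht]

lemma integral_sub_pow_div_factorial (n : ℕ) (r : ℝ) :
    ∫ t in 0..r, (r - t) ^ n / n.factorial = r ^ (n + 1) / (n + 1).factorial := by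
  rw [intervalIntegral.integral_div, intervalIntegral.integral_comp_sub_left (fun s => s ^ n) r]
  simp only [sub_self, sub_zero, integral_pow, zero_pow n.succ_ne_zero, Nat.factorial_succ,
    Nat.cast_mul, Nat.cast_succ]
  field_simp

lemma volume_solidSimplex_fin (n : ℕ) {r : ℝ} (hr : 0 ≤ r) :
    volume (solidSimplex (Fin n) r) = ENNReal.ofReal (r ^ n / n.factorial) := by
  induction n generalizing r with
  | zero =>
    have : solidSimplex (Fin 0) r = univ := by ext x; simp [solidSimplex, hr]
    rw [this, volume_pi, Measure.pi_univ]; simp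
  | succ n ih =>
    let e := MeasurableEquiv.piFinSuccAbove (fun _ : Fin (n + 1) => ℝ) 0
    have hS : MeasurableSet (e.symm ⁻¹' solidSimplex (Fin (n + 1)) r) :=
      (isClosed_solidSimplex _ r).measurableSet.preimage e.symm.measurable
    have hslice (t : ℝ) : volume (Prod.mk t ⁻¹' (e.symm ⁻¹' solidSimplex (Fin (n + 1)) r)) =
        (Icc 0 r).indicator (fun t => ENNReal.ofReal ((r - t) ^ n / n.factorial)) t := by
      rw [prodMk_preimage_piFinSuccAbove_symm_preimage_solidSimplex]
      by_cases ht : 0 ≤ t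
      · by_cases htr : t ≤ r
        · simp [ht, htr, ih (sub_nonneg.2 htr)]
        · simp [htr, solidSimplex_eq_empty (sub_neg.2 (not_le.1 htr))]
      · simp [ht]
    rw [← (volume_preserving_piFinSuccAbove (fun _ => ℝ) 0).symm.measure_preimage_equiv,
      Measure.volume_eq_prod, Measure.prod_apply hS]
    simp_rw [hslice]
    rw [lintegral_indicator measurableSet_Icc, ← ofReal_integral_eq_lintegral_ofReal,
      integral_Icc_eq_integral_Ioc, ← intervalIntegral.integral_of_le hr,
      integral_sub_pow_div_factorial]
    · exact Continuous.integrableOn_Icc (by fun_prop)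
    · filter_upwards [self_mem_ae_restrict measurableSet_Icc] with t ht
      exact div_nonneg (pow_nonneg (sub_nonneg.2 ht.2) n) (Nat.cast_nonneg _)

lemma volume_solidSimplex (ι : Type*) [Fintype ι] {r : ℝ} (hr : 0 ≤ r) :
    volume (solidSimplex ι r) =
      ENNReal.ofReal (r ^ Fintype.card ι / (Fintype.card ι).factorial) := by
  let e := MeasurableEquiv.piCongrLeft (fun _ => ℝ) (Fintype.equivFin ι)
  have : solidSimplex ι r = e ⁻¹' solidSimplex (Fin _) r := by
    ext x
    simp only [solidSimplex, mem_ofPred_eq, mem_preimage, e, MeasurableEquiv.coe_piCongrLeft,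
      Equiv.piCongrLeft_apply, eq_rec_constant]
    rw [(Fintype.equivFin ι).symm.forall_congr_left,
      Fintype.sum_equiv (Fintype.equivFin ι).symm _ x (fun _ => rfl)]
    simp only [Equiv.symm_symm, Equiv.symm_apply_apply]
  rw [this, (volume_measurePreserving_piCongrLeft (fun _ => ℝ) _).measure_preimage_equiv,
    volume_solidSimplex_fin _ hr]

lemma hachimojiPairing_comm (g h : HachimojiGroup) :
    hachimojiPairing g h = hachimojiPairing h g := by
  simp only [hachimojiPairing]; ring

lemma hachimojiPairing_add_left (g g' h : HachimojiGroup) :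
    hachimojiPairing (g + g') h = hachimojiPairing g h + hachimojiPairing g' h := by
  simp only [hachimojiPairing, Prod.fst_add, Prod.snd_add]; ring

lemma hachimojiEps_comm (g h : HachimojiGroup) : hachimojiEps g h = hachimojiEps h g := by
  rw [hachimojiEps, hachimojiEps, hachimojiPairing_comm]

lemma hachimojiEps_zero_left (h : HachimojiGroup) : hachimojiEps 0 h = 1 := by
  simp [hachimojiEps, hachimojiPairing]

lemma hachimojiEps_add_left (g g' h : HachimojiGroup) :
    hachimojiEps (g + g') h = hachimojiEps g h * hachimojiEps g' h := by
  simp only [hachimojiEps, hachimojiPairing_add_left]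
  generalize hachimojiPairing g h = a
  generalize hachimojiPairing g' h = b
  have two_cases : ∀ x : ZMod 2, x = 0 ∨ x = 1 := by decide
  rcases two_cases a with rfl | rfl <;> rcases two_cases b with rfl | rfl <;> simp +decide

lemma sum_hachimojiEps (g : HachimojiGroup) :
    ∑ h, hachimojiEps g h = if g = 0 then 8 else 0 := by
  have univ_zmod2 : (Finset.univ : Finset (ZMod 2)) = {0, 1} := rfl
  obtain ⟨a, b, c⟩ := g
  simp only [Fintype.sum_prod_type, univ_zmod2, Finset.sum_pair zero_ne_one]
  fin_cases a <;> fin_cases b <;> fin_cases c <;> simp +decide [hachimojiEps] <;> norm_num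

lemma sum_hachimojiEps_mul_hachimojiEps (g g' : HachimojiGroup) :
    ∑ h, hachimojiEps g h * hachimojiEps h g' = if g = g' then 8 else 0 := by
  have add_eq_zero_iff : g + g' = 0 ↔ g = g' := by
    rw [← ZModModule.sub_eq_add, sub_eq_zero]
  simp_rw [hachimojiEps_comm _ g', ← hachimojiEps_add_left, sum_hachimojiEps, add_eq_zero_iff]

lemma det_smul_one_sub_allOnes {ι : Type*} [Fintype ι] [DecidableEq ι] {c : ℝ} (hc : c ≠ 0) :
    (c • 1 - Matrix.of fun _ _ => 1 : Matrix ι ι ℝ).det =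
      c ^ Fintype.card ι * (1 - Fintype.card ι / c) := by
  have : (c • 1 - Matrix.of fun _ _ => 1 : Matrix ι ι ℝ) =
      c • (1 + Matrix.replicateCol Unit (fun _ : ι => (1 : ℝ)) *
        Matrix.replicateRow Unit (fun _ : ι => -c⁻¹)) := by
    ext i j
    by_cases hij : i = j <;> simp [Matrix.mul_apply, hij, mul_add, hc, sub_eq_add_neg]
  rw [this, Matrix.det_smul, Matrix.det_one_add_replicateCol_mul_replicateRow]
  simp [dotProduct, div_eq_mul_inv, sub_eq_add_neg]

abbrev HachimojiNonzero := {g : HachimojiGroup // g ≠ 0}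

lemma card_hachimojiNonzero : Fintype.card HachimojiNonzero = 7 := rfl

lemma sum_nonzero_hachimojiEps_mul_hachimojiEps (g g' : HachimojiGroup) :
    ∑ h : HachimojiNonzero, hachimojiEps g h * hachimojiEps h g' =
      (if g = g' then 8 else 0) - 1 := by
  rw [← sum_hachimojiEps_mul_hachimojiEps,
    Fintype.sum_eq_add_sum_subtype_ne (fun h => hachimojiEps g h * hachimojiEps h g') 0,
    hachimojiEps_comm g, hachimojiEps_zero_left, hachimojiEps_zero_left]
  ring

lemma sum_nonzero_hachimojiEps (h : HachimojiNonzero) :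
    ∑ g : HachimojiNonzero, hachimojiEps g h = -1 := by
  have := sum_hachimojiEps h
  rw [Fintype.sum_eq_add_sum_subtype_ne _ 0, hachimojiEps_comm _ 0, hachimojiEps_zero_left,
    if_neg h.2] at this
  simp_rw [hachimojiEps_comm _ (h : HachimojiGroup)]
  linarith

noncomputable def hachimojiEpsMatrix : Matrix HachimojiNonzero HachimojiNonzero ℝ :=
  Matrix.of fun g h => hachimojiEps g h

lemma hachimojiEpsMatrix_mul_self :
    hachimojiEpsMatrix * hachimojiEpsMatrix = (8 : ℝ) • 1 - Matrix.of fun _ _ => 1 := by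
  ext g g'
  simp [hachimojiEpsMatrix, Matrix.mul_apply, sum_nonzero_hachimojiEps_mul_hachimojiEps,
    Matrix.one_apply, Subtype.ext_iff]

lemma abs_det_hachimojiEpsMatrix : |hachimojiEpsMatrix.det| = 512 := by
  have h : hachimojiEpsMatrix.det ^ 2 = 512 ^ 2 := by
    rw [sq, ← Matrix.det_mul, hachimojiEpsMatrix_mul_self,
      det_smul_one_sub_allOnes (by norm_num), card_hachimojiNonzero]
    norm_num
  rw [← sq_abs] at h
  exact (pow_left_inj₀ (abs_nonneg _) (by norm_num) two_ne_zero).1 h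

lemma hachimojiEpsMatrix_mulVec_apply (lam : HachimojiNonzero → ℝ) (g : HachimojiNonzero) :
    (hachimojiEpsMatrix *ᵥ lam) g = ∑ h : HachimojiNonzero, hachimojiEps g h * lam h :=
  rfl

lemma sum_hachimojiEpsMatrix_mulVec (lam : HachimojiNonzero → ℝ) :
    ∑ g, (hachimojiEpsMatrix *ᵥ lam) g = -∑ h, lam h := by
  simp only [hachimojiEpsMatrix_mulVec_apply]
  rw [Finset.sum_comm]
  simp [← Finset.sum_mul, sum_nonzero_hachimojiEps]

lemma diagonallyDominant_eq_preimage_solidSimplex :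
    {lam : HachimojiNonzero → ℝ |
      (∀ g : HachimojiGroup, 0 ≤ 1 + ∑ h : HachimojiNonzero, hachimojiEps g h * lam h) ∧
      3 ≤ ∑ h, lam h} =
      Matrix.toLin' hachimojiEpsMatrix ⁻¹' ((· + 1) ⁻¹' solidSimplex HachimojiNonzero 4) := by
  ext lam
  have hsum : ∑ g, ((hachimojiEpsMatrix *ᵥ lam) g + 1) = 7 - ∑ h, lam h := by
    simp only [Finset.sum_add_distrib, sum_hachimojiEpsMatrix_mulVec, Finset.sum_const,
      Finset.card_univ, card_hachimojiNonzero, nsmul_eq_mul, Nat.cast_ofNat, mul_one]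
    ring
  simp only [mem_ofPred_eq, mem_preimage, Matrix.toLin'_apply, solidSimplex, Pi.add_apply,
    Pi.one_apply]
  rw [hsum]
  simp only [hachimojiEpsMatrix_mulVec_apply]
  constructor
  · rintro ⟨hdom, hpos⟩
    exact ⟨fun g => by linarith [hdom g], by linarith⟩
  · rintro ⟨hdom, hle⟩
    refine ⟨fun g => ?_, by linarith⟩
    by_cases hg : g = 0
    · simp only [hg, hachimojiEps_zero_left, one_mul]
      linarith
    · linarith [hdom ⟨g, hg⟩]

/-- The Lebesgue volume of the eigenvalue parameterization `Δ_dd` (a subset of ℝ⁷) of the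
diagonally dominant hachimoji 7-parameter Markov matrices equals `2/315`. -/
theorem h7p_volume_diagonally_dominant :
    MeasureTheory.volume {lam : {g : HachimojiGroup // g ≠ 0} → ℝ |
      (∀ g : HachimojiGroup,
        0 ≤ 1 + ∑ h : {g : HachimojiGroup // g ≠ 0}, hachimojiEps g h.1 * lam h) ∧
      3 ≤ ∑ h : {g : HachimojiGroup // g ≠ 0}, lam h} =
    ENNReal.ofReal (2 / 315) := by
  have hdet : LinearMap.det (Matrix.toLin' hachimojiEpsMatrix) ≠ 0 := by
    rw [LinearMap.det_toLin', ← abs_ne_zero, abs_det_hachimojiEpsMatrix]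
    norm_num
  rw [diagonallyDominant_eq_preimage_solidSimplex, Measure.addHaar_preimage_linearMap _ hdet,
    measure_preimage_add_right, volume_solidSimplex _ (by norm_num), LinearMap.det_toLin', abs_inv,
    abs_det_hachimojiEpsMatrix, card_hachimojiNonzero, ← ENNReal.ofReal_mul (by norm_num)]
  norm_num [Nat.factorial]
end
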